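/- arXiv:2007.01854 — 5 statements merged into one kernel-verified Lean document; each statement's English description precedes it below -/
import Mathlib

section
/- Fix an integer base b ≥ 2 and positive real biases p_0, …, p_{b−1} with Σ_{i<b} p_i = 1. Let x : ℕ → {0,…,b−1} be an infinite base-b sequence. Suppose that for every integer k ≥ 1 and every block w of length k in base b, the frequency of w among the consecutive non-overlapping length-k blocks of x starting at index 0 satisfies lim_{ℓ→∞} (1/ℓ)·#{ j < ℓ : x(jk + i) = w(i) for all i < k } = ∏_{i<k} p_{w(i)} (i.e., x is biased simply normal in base b^k with the product biases, for every k). Then for every integer r ≥ 1 and every block v of length r in base b, lim_{n→∞} occ(x[0:n−1], v)/n = ∏_{i<r} p_{v(i)}, where occ(x[0:n−1], v) counts all (overlapping) occurrences of v among the first n digits of x. -/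
/-!
Fix a block length `k ≥ r` and sort the positions `m` by their residue `s = m mod k`. When
`s + r ≤ k`, an occurrence of `v` at `m = j k + s` sits inside the `j`-th aligned block of length
`k`, so along the residue class `s` the frequency of `v` is the sum of the block frequencies
`μ(w)` over the blocks `w` carrying `v` at offset `s`; since `∑ p = 1` this sum is `μ(v)`. The
remaining `r - 1` residue classes contribute at most `(r - 1) / k`, so `occ x n v / n` is
eventually squeezed between `(k - r + 1) μ(v) / k` and `(k - r + 1) μ(v) / k + (r - 1) / k`
up to `o(1)`; let `k → ∞`.
-/

open Filter Finset

/-- `occ x n v` is the number of (possibly overlapping) occurrences of the block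
`v : Fin r → Fin b` among the first `n` digits of the sequence `x : ℕ → Fin b`,
i.e. the number of starting indices `m` with `m + r ≤ n` such that
`x (m+i) = v i` for all `i < r`. -/
def occ {b : ℕ} (x : ℕ → Fin b) (n : ℕ) {r : ℕ} (v : Fin r → Fin b) : ℕ :=
  ((Finset.range (n + 1 - r)).filter (fun m => ∀ i : Fin r, x (m + i) = v i)).card

open scoped Topology

theorem sum_prod_cylinder_eq {ι κ α R : Type*} [Fintype ι] [DecidableEq ι] [Fintype κ]
    [Fintype α] [DecidableEq α] [CommSemiring R] (p : α → R) (hp : ∑ a, p a = 1)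
    (e : κ ↪ ι) (v : κ → α) :
    ∑ w ∈ univ.filter (fun w : ι → α => ∀ j, w (e j) = v j), ∏ i, p (w i) = ∏ j, p (v j) := by
  -- The constraint on `w` is coordinatewise, so the sum of products is a product of sums.
  set g : ι → α → R := fun i a => if ∀ j, e j = i → a = v j then p a else 0
  have hg_on (j : κ) (a : α) : g (e j) a = if a = v j then p a else 0 := by
    simp only [g]
    exact if_congr ⟨fun h => h j rfl, fun h j' hj' => e.injective hj' ▸ h⟩ rfl rfl
  have hg_off (i : ι) (hi : i ∉ univ.map e) : ∑ a, g i a = 1 := by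
    rw [← hp]
    exact sum_congr rfl fun a _ =>
      if_pos fun j hj => absurd (hj ▸ mem_map_of_mem e (mem_univ j)) hi
  calc ∑ w ∈ univ.filter (fun w : ι → α => ∀ j, w (e j) = v j), ∏ i, p (w i)
      = ∑ w : ι → α, ∏ i, g i (w i) := by
        rw [sum_filter]
        refine sum_congr rfl fun w _ => ?_
        split_ifs with hw
        · exact prod_congr rfl fun i _ => (if_pos fun j hj => hj ▸ hw j).symm
        · obtain ⟨j, hj⟩ := not_forall.1 hw
          exact (prod_eq_zero (mem_univ (e j)) (by rw [hg_on, if_neg hj])).symm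
    _ = ∏ i, ∑ a, g i a := (Fintype.prod_sum g).symm
    _ = ∏ j, p (v j) := by
        rw [← prod_mul_prod_compl (univ.map e), prod_map,
          prod_eq_one (s := (univ.map e)ᶜ) fun i hi => hg_off i (mem_compl.1 hi), mul_one]
        simp [hg_on]

theorem tendsto_of_forall_eventually_between {α ι κ : Type*} [Preorder α] [TopologicalSpace α]
    [OrderTopology α] {l : Filter ι} {l' : Filter κ} [l'.NeBot] {f : ι → α} {g h : κ → ι → α}
    {A B : κ → α} {L : α} (hfg : ∀ᶠ k in l', ∀ᶠ n in l, g k n ≤ f n ∧ f n ≤ h k n)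
    (hg : ∀ᶠ k in l', Tendsto (g k) l (𝓝 (A k))) (hh : ∀ᶠ k in l', Tendsto (h k) l (𝓝 (B k)))
    (hA : Tendsto A l' (𝓝 L)) (hB : Tendsto B l' (𝓝 L)) : Tendsto f l (𝓝 L) := by
  refine tendsto_order.2 ⟨fun a ha => ?_, fun a ha => ?_⟩
  · obtain ⟨k, hak, hk, hgk⟩ := ((tendsto_order.1 hA).1 a ha |>.and (hfg.and hg)).exists
    filter_upwards [(tendsto_order.1 hgk).1 a hak, hk] with n hn hfn
    exact hn.trans_le hfn.1
  · obtain ⟨k, hak, hk, hhk⟩ := ((tendsto_order.1 hB).2 a ha |>.and (hfg.and hh)).exists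
    filter_upwards [(tendsto_order.1 hhk).2 a hak, hk] with n hn hfn
    exact hfn.2.trans_lt hn

theorem Filter.Tendsto.div_natCast_comp {u : ℕ → ℝ} {μ c : ℝ} {m : ℕ → ℕ}
    (hu : Tendsto (fun ℓ => u ℓ / ℓ) atTop (𝓝 μ)) (hm : Tendsto m atTop atTop)
    (hmc : Tendsto (fun n => (m n : ℝ) / n) atTop (𝓝 c)) :
    Tendsto (fun n => u (m n) / n) atTop (𝓝 (μ * c)) := by
  refine ((hu.comp hm).mul hmc).congr' ?_
  filter_upwards [hm.eventually_ne_atTop 0] with n hn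
  simp only [Function.comp]
  field_simp

theorem tendsto_natCast_div_div_self (k : ℕ) :
    Tendsto (fun n : ℕ => ((n / k : ℕ) : ℝ) / n) atTop (𝓝 (k : ℝ)⁻¹) := by
  have := (tendsto_nat_floor_mul_div_atTop (inv_nonneg.2 (k.cast_nonneg (α := ℝ)))).comp
    tendsto_natCast_atTop_atTop
  refine this.congr fun n => ?_
  simp [inv_mul_eq_div, Nat.floor_div_eq_div]

theorem tendsto_natCast_div_add_one_div_self (k : ℕ) :
    Tendsto (fun n : ℕ => ((n / k + 1 : ℕ) : ℝ) / n) atTop (𝓝 (k : ℝ)⁻¹) := by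
  have := (tendsto_natCast_div_div_self k).add (tendsto_const_div_atTop_nhds_zero_nat (1 : ℝ))
  rw [add_zero] at this
  refine this.congr fun n => ?_
  push_cast
  ring

theorem tendsto_natCast_sub_add_one_div_self (r : ℕ) :
    Tendsto (fun k : ℕ => ((k - r + 1 : ℕ) : ℝ) / k) atTop (𝓝 1) := by
  have := tendsto_const_nhds (x := (1 : ℝ)).sub
    (tendsto_const_div_atTop_nhds_zero_nat ((r : ℝ) - 1))
  rw [sub_zero] at this
  refine this.congr' ?_
  filter_upwards [eventually_ge_atTop (max r 1)] with k hk
  have hk0 : (k : ℝ) ≠ 0 := Nat.cast_ne_zero.2 (by omega)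
  rw [Nat.cast_add, Nat.cast_sub (le_of_max_le_left hk), Nat.cast_one]
  field_simp
  ring

section Residues

variable (P : ℕ → Prop) [DecidablePred P] {k : ℕ}

theorem card_filter_mod_eq_le_card_filter_mul_add {N ℓ : ℕ} (hN : N ≤ ℓ * k)
    (s : ℕ) : #{m ∈ (range N).filter P | m % k = s} ≤ #{j ∈ range ℓ | P (j * k + s)} := by
  refine card_le_card_of_injOn (· / k) (fun m hm => ?_) (fun m₁ hm₁ m₂ hm₂ h => ?_)
  · simp only [mem_coe, mem_filter, mem_range] at hm ⊢
    obtain ⟨⟨hmN, hPm⟩, rfl⟩ := hm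
    exact ⟨Nat.div_lt_of_lt_mul (by linarith), by rwa [Nat.div_add_mod']⟩
  · simp only [mem_coe, mem_filter] at hm₁ hm₂
    rw [← Nat.div_add_mod' m₁ k, ← Nat.div_add_mod' m₂ k, hm₁.2, hm₂.2]
    exact congrArg (· * k + s) h

theorem card_filter_mul_add_le_card_filter_mod_eq {N ℓ s : ℕ} (hs : s < k)
    (hN : ℓ * k + s < N + k) :
    #{j ∈ range ℓ | P (j * k + s)} ≤ #{m ∈ (range N).filter P | m % k = s} := by
  refine card_le_card_of_injOn (· * k + s) (fun j hj => ?_) (fun j₁ _ j₂ _ h => ?_)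
  · simp only [mem_coe, mem_filter, mem_range] at hj ⊢
    refine ⟨⟨?_, hj.2⟩, by simp [Nat.add_mod, Nat.mod_eq_of_lt hs]⟩
    nlinarith [hj.1]
  · exact Nat.eq_of_mul_eq_mul_right (by omega) (Nat.add_right_cancel h)

end Residues

section Occurrences

variable {b r : ℕ} (x : ℕ → Fin b) (v : Fin r → Fin b)

def alignedOcc (k s ℓ : ℕ) : ℕ :=
  #{j ∈ range ℓ | ∀ i : Fin r, x (j * k + s + i) = v i}

variable {k : ℕ}

theorem alignedOcc_eq_sum {s : ℕ} (hs : s + r ≤ k) (ℓ : ℕ) :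
    alignedOcc x v k s ℓ = ∑ w ∈ univ.filter
      (fun w : Fin k → Fin b => ∀ j, w ((Fin.natAddEmb s).trans (Fin.castLEEmb hs) j) = v j),
      alignedOcc x w k 0 ℓ := by
  rw [alignedOcc, card_eq_sum_card_fiberwise (f := fun j (i : Fin k) => x (j * k + i))
    fun j hj => ?_]
  · refine sum_congr rfl fun w hw => ?_
    rw [filter_filter, alignedOcc]
    congr 1
    refine filter_congr fun j _ => ⟨fun h i => congrFun h.2 i, fun h => ⟨fun i => ?_, funext h⟩⟩
    simp only [mem_filter, mem_univ, true_and] at hw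
    rw [← hw i, ← h]
    simp [add_assoc]
  · simp only [mem_coe, mem_filter, mem_univ, true_and] at hj ⊢
    simpa [add_assoc] using hj.2

theorem tendsto_alignedOcc_div {p : Fin b → ℝ} (hp : ∑ a, p a = 1)
    (hx : ∀ w : Fin k → Fin b,
      Tendsto (fun ℓ : ℕ => (alignedOcc x w k 0 ℓ : ℝ) / ℓ) atTop (𝓝 (∏ i, p (w i))))
    {s : ℕ} (hs : s + r ≤ k) :
    Tendsto (fun ℓ : ℕ => (alignedOcc x v k s ℓ : ℝ) / ℓ) atTop (𝓝 (∏ i, p (v i))) := by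
  rw [← sum_prod_cylinder_eq p hp ((Fin.natAddEmb s).trans (Fin.castLEEmb hs)) v]
  refine (tendsto_finsetSum _ fun w _ => hx w).congr fun ℓ => ?_
  rw [alignedOcc_eq_sum x v hs, Nat.cast_sum, sum_div]
  -- the two cylinders differ only in their `Decidable` instances
  congr

theorem tendsto_sum_alignedOcc_div {p : Fin b → ℝ} (hp : ∑ a, p a = 1)
    (hx : ∀ w : Fin k → Fin b,
      Tendsto (fun ℓ : ℕ => (alignedOcc x w k 0 ℓ : ℝ) / ℓ) atTop (𝓝 (∏ i, p (w i))))
    (hrk : r ≤ k) {m : ℕ → ℕ} (hm : Tendsto m atTop atTop)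
    (hmk : Tendsto (fun n => (m n : ℝ) / n) atTop (𝓝 (k : ℝ)⁻¹)) :
    Tendsto (fun n => ((∑ s ∈ range (k - r + 1), alignedOcc x v k s (m n) : ℕ) : ℝ) / n)
      atTop (𝓝 ((∏ i, p (v i)) * (((k - r + 1 : ℕ) : ℝ) / k))) := by
  have hs : ∀ s ∈ range (k - r + 1), Tendsto (fun n => (alignedOcc x v k s (m n) : ℝ) / n)
      atTop (𝓝 ((∏ i, p (v i)) * (k : ℝ)⁻¹)) := fun s hs =>
    (tendsto_alignedOcc_div x v hp hx (by rw [mem_range] at hs; omega)).div_natCast_comp hm hmk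
  refine ((tendsto_finsetSum _ hs).congr fun n => by push_cast; rw [sum_div]).trans_eq ?_
  rw [sum_const, card_range, nsmul_eq_mul, mul_left_comm, div_eq_mul_inv]

theorem occ_eq_sum_range_mod (hk : 0 < k) (n : ℕ) :
    occ x n v = ∑ s ∈ range k,
      #{m ∈ (range (n + 1 - r)).filter (fun m => ∀ i : Fin r, x (m + i) = v i) | m % k = s} :=
  card_eq_sum_card_fiberwise fun m _ => mem_range.2 (Nat.mod_lt m hk)

theorem sum_alignedOcc_le_occ (hr : 0 < r) (hrk : r ≤ k) (n : ℕ) :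
    ∑ s ∈ range (k - r + 1), alignedOcc x v k s (n / k) ≤ occ x n v := by
  have hk : 0 < k := hr.trans_le hrk
  rw [occ_eq_sum_range_mod x v hk, ← sum_range_add_sum_Ico _ (by omega : k - r + 1 ≤ k)]
  refine le_add_right (sum_le_sum fun s hs => ?_)
  have hs : s + r ≤ k := by rw [mem_range] at hs; omega
  refine card_filter_mul_add_le_card_filter_mod_eq (fun m => ∀ i : Fin r, x (m + i) = v i)
    (by omega) ?_
  have := Nat.div_mul_le_self n k
  have : n < k → n / k = 0 := Nat.div_eq_of_lt
  omega

theorem occ_le_sum_alignedOcc_add (hr : 0 < r) (hrk : r ≤ k) (n : ℕ) :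
    occ x n v ≤ ∑ s ∈ range (k - r + 1), alignedOcc x v k s (n / k + 1)
      + (r - 1) * (n / k + 1) := by
  have hk : 0 < k := hr.trans_le hrk
  have hN : n + 1 - r ≤ (n / k + 1) * k := by
    have := Nat.lt_div_mul_add (a := n) hk
    rw [add_mul, one_mul]; omega
  rw [occ_eq_sum_range_mod x v hk, ← sum_range_add_sum_Ico _ (by omega : k - r + 1 ≤ k)]
  gcongr with s _ s _
  · exact card_filter_mod_eq_le_card_filter_mul_add _ hN s
  · calc _ ≤ ∑ _s ∈ Ico (k - r + 1) k, (n / k + 1) :=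
          sum_le_sum fun s _ => (card_filter_mod_eq_le_card_filter_mul_add _ hN s).trans
            ((card_filter_le _ _).trans_eq (card_range _))
      _ = (r - 1) * (n / k + 1) := by rw [sum_const, Nat.card_Ico, smul_eq_mul]; congr 1; omega

end Occurrences

theorem blocks_freq_of_biased_simply_normal_all_powers_general (b : ℕ)
    (p : Fin b → ℝ) (hsum : ∑ i, p i = 1) (x : ℕ → Fin b)
    (hx : ∀ k : ℕ, 1 ≤ k → ∀ w : Fin k → Fin b,
      Tendsto
        (fun ℓ : ℕ =>
          (((Finset.range ℓ).filter (fun j => ∀ i : Fin k, x (j * k + i) = w i)).card : ℝ) / ℓ)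
        atTop (nhds (∏ i, p (w i)))) :
    ∀ r : ℕ, 1 ≤ r → ∀ v : Fin r → Fin b,
      Tendsto (fun n : ℕ => (occ x n v : ℝ) / n) atTop (nhds (∏ i, p (v i))) := by
  intro r hr v
  set μ := ∏ i, p (v i)
  have hblocks (k : ℕ) (hrk : r ≤ k) (w : Fin k → Fin b) :
      Tendsto (fun ℓ : ℕ => (alignedOcc x w k 0 ℓ : ℝ) / ℓ) atTop (𝓝 (∏ i, p (w i))) :=
    hx k (hr.trans hrk) w
  have hc := (tendsto_natCast_sub_add_one_div_self r).const_mul μ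
  rw [mul_one] at hc
  refine tendsto_of_forall_eventually_between (l' := atTop)
    (g := fun k n => ((∑ s ∈ range (k - r + 1), alignedOcc x v k s (n / k) : ℕ) : ℝ) / n)
    (h := fun k n => ((∑ s ∈ range (k - r + 1), alignedOcc x v k s (n / k + 1)
      + (r - 1) * (n / k + 1) : ℕ) : ℝ) / n)
    (A := fun k => μ * (((k - r + 1 : ℕ) : ℝ) / k))
    (B := fun k => μ * (((k - r + 1 : ℕ) : ℝ) / k) + ((r - 1 : ℕ) : ℝ) * (k : ℝ)⁻¹)
    ?_ ?_ ?_ hc ?_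
  · filter_upwards [eventually_ge_atTop r] with k hrk
    refine Eventually.of_forall fun n => ⟨?_, ?_⟩ <;> gcongr
    exacts [mod_cast sum_alignedOcc_le_occ x v hr hrk n,
      mod_cast occ_le_sum_alignedOcc_add x v hr hrk n]
  · filter_upwards [eventually_ge_atTop r] with k hrk
    exact tendsto_sum_alignedOcc_div x v hsum (hblocks k hrk) hrk
      (Nat.tendsto_div_const_atTop (by omega)) (tendsto_natCast_div_div_self k)
  · filter_upwards [eventually_ge_atTop r] with k hrk
    refine ((tendsto_sum_alignedOcc_div x v hsum (hblocks k hrk) hrk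
      ((tendsto_add_atTop_nat 1).comp (Nat.tendsto_div_const_atTop (by omega)))
      (tendsto_natCast_div_add_one_div_self k)).add
      ((tendsto_natCast_div_add_one_div_self k).const_mul ((r - 1 : ℕ) : ℝ))).congr fun n => ?_
    simp only [Function.comp_apply]
    push_cast
    ring
  · simpa using hc.add ((tendsto_inv_atTop_nhds_zero_nat (𝕜 := ℝ)).const_mul ((r - 1 : ℕ) : ℝ))

/-- If `x` is biased simply normal in base `b^k` (with the product biases) for every `k ≥ 1`
— i.e. each length-`k` block `w` occurs among the consecutive non-overlapping length-`k`
blocks of `x` with limiting frequency `∏_{i<k} p_{w i}` — then every block `v` of length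
`r ≥ 1` occurs in `x` (counting all overlapping occurrences) with limiting frequency
`∏_{i<r} p_{v i}`. -/
theorem blocks_freq_of_biased_simply_normal_all_powers (b : ℕ) (hb : 2 ≤ b)
    (p : Fin b → ℝ) (hp : ∀ i, 0 < p i) (hsum : ∑ i, p i = 1) (x : ℕ → Fin b)
    (hx : ∀ k : ℕ, 1 ≤ k → ∀ w : Fin k → Fin b,
      Tendsto
        (fun ℓ : ℕ =>
          (((Finset.range ℓ).filter (fun j => ∀ i : Fin k, x (j * k + i) = w i)).card : ℝ) / ℓ)
        atTop (nhds (∏ i, p (w i)))) :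
    ∀ r : ℕ, 1 ≤ r → ∀ v : Fin r → Fin b,
      Tendsto (fun n : ℕ => (occ x n v : ℝ) / n) atTop (nhds (∏ i, p (v i))) :=
  blocks_freq_of_biased_simply_normal_all_powers_general b p hsum x hx
end

section
/- Fix an integer base b ≥ 2 and positive real biases p_0, …, p_{b−1} with Σ_{i<b} p_i = 1. Let x : ℕ → {0,…,b−1} be an infinite base-b sequence. Suppose that for every integer r ≥ 1 and every block v of length r in base b, lim_{n→∞} occ(x[0:n−1], v)/n = ∏_{i<r} p_{v(i)}. Then x is biased normal with respect to p_0, …, p_{b−1}: for every integer k ≥ 1, every starting offset m ≥ 0, and every block w of length k in base b, lim_{N→∞} (1/N)·#{ j < N : x(m + jk + i) = w(i) for all i < k } = ∏_{i<k} p_{w(i)}. -/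
/-!
Only upper bounds need proof: for fixed `k` and `m` the aligned frequencies of all words `w` of
length `k` sum to `1`, and so do the products `∏ i, p (w i)`, so upper bounds for every word
give the lower bounds.

For the upper bound, look at the windows of length `(t + 1) * k` at all positions. For each
offset `o ≤ k` a window contains `t` disjoint blocks at `o, o + k, …`; for the offset that
aligns it with `m + kℕ` these are aligned blocks of `x`, and each aligned block is seen in this
way by `t * k` windows. Windows occur with product-measure frequencies, and under the product
measure the number of blocks equal to `w` at a fixed offset has mean `t P` and variance
`t (P - P²)`, where `P = ∏ i, p (w i)`. Dominating that number by the quadratic envelope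
`t P + δ + ∑ₒ (countₒ - t P)² / δ`, of mean `t P + δ + (k + 1) t (P - P²) / δ`, and
taking `δ = ε t` with `t` large bounds the aligned frequency of `w` by `P + O(ε)`.
-/

open Filter Finset

open Topology

section ProductWeight

variable {ι α : Type*} [Fintype ι] [DecidableEq ι] [Fintype α] {p : α → ℝ}

theorem sum_prod_eq_one (hp : ∑ a, p a = 1) : ∑ u : ι → α, ∏ i, p (u i) = 1 := by
  rw [← Fintype.prod_sum, hp, prod_const_one]

variable [DecidableEq α]

theorem sum_prod_mul_ite_forall_mem_eq (hp : ∑ a, p a = 1) (S : Finset ι) (g : ι → α) :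
    ∑ u : ι → α, (∏ i, p (u i)) * (if ∀ i ∈ S, u i = g i then 1 else 0) =
      ∏ i ∈ S, p (g i) := by
  have hcyl : univ.filter (fun u : ι → α => ∀ i ∈ S, u i = g i) =
      Fintype.piFinset fun i => if i ∈ S then {g i} else univ := by
    ext u
    simp only [mem_filter, mem_univ, true_and, Fintype.mem_piFinset]
    refine forall_congr' fun i => ?_
    split_ifs <;> simp [*]
  simp only [mul_boole]
  rw [← sum_filter, hcyl, ← prod_univ_sum]
  simp only [apply_ite (fun s : Finset α => ∑ a ∈ s, p a), sum_singleton, hp]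
  rw [prod_ite_mem, univ_inter]

variable {κ : Type*} {J : Finset κ} {S : κ → Finset ι} {g : ι → α} {P : ℝ}

theorem sum_prod_mul_card_filter (hP : ∀ j ∈ J, ∏ i ∈ S j, p (g i) = P)
    (hp : ∑ a, p a = 1) :
    ∑ u : ι → α, (∏ i, p (u i)) * #{j ∈ J | ∀ i ∈ S j, u i = g i} = #J * P := by
  simp only [natCast_card_filter, mul_sum]
  rw [sum_comm, sum_congr rfl fun j hj => (sum_prod_mul_ite_forall_mem_eq hp (S j) g).trans
    (hP j hj), sum_const, nsmul_eq_mul]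

theorem sum_prod_mul_card_filter_sq [DecidableEq κ] (hS : (J : Set κ).PairwiseDisjoint S)
    (hP : ∀ j ∈ J, ∏ i ∈ S j, p (g i) = P) (hp : ∑ a, p a = 1) :
    ∑ u : ι → α, (∏ i, p (u i)) * (#{j ∈ J | ∀ i ∈ S j, u i = g i} : ℝ) ^ 2 =
      #J * (#J * P ^ 2 + (P - P ^ 2)) := by
  -- two slots together form a cylinder on their union
  have hpair : ∀ j ∈ J, ∀ j' ∈ J, ∑ u : ι → α, (∏ i, p (u i)) *
      ((if ∀ i ∈ S j, u i = g i then 1 else 0) * (if ∀ i ∈ S j', u i = g i then 1 else 0)) =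
      P ^ 2 + if j = j' then P - P ^ 2 else 0 := by
    intro j hj j' hj'
    simp only [ite_zero_mul_ite_zero, mul_one, ← forall_mem_union]
    rw [sum_prod_mul_ite_forall_mem_eq hp]
    split_ifs with h
    · rw [h, union_self, hP j' hj']
      ring
    · rw [prod_union (hS hj hj' h), hP j hj, hP j' hj', sq, add_zero]
  simp_rw [natCast_card_filter, sq, sum_mul_sum, mul_sum]
  rw [sum_comm, sum_congr rfl fun j _ => sum_comm,
    sum_congr rfl fun j hj => sum_congr rfl (hpair j hj)]
  simp only [sum_add_distrib, sum_ite_eq, sum_const, nsmul_eq_mul]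
  rw [sum_congr rfl fun j hj => by rw [if_pos hj], sum_const, nsmul_eq_mul]
  ring

theorem sum_prod_mul_card_filter_sub_sq [DecidableEq κ] (hS : (J : Set κ).PairwiseDisjoint S)
    (hP : ∀ j ∈ J, ∏ i ∈ S j, p (g i) = P) (hp : ∑ a, p a = 1) :
    ∑ u : ι → α,
        (∏ i, p (u i)) * ((#{j ∈ J | ∀ i ∈ S j, u i = g i} : ℝ) - #J * P) ^ 2 =
      #J * (P - P ^ 2) := by
  have hexpand : ∀ u : ι → α,
      (∏ i, p (u i)) * ((#{j ∈ J | ∀ i ∈ S j, u i = g i} : ℝ) - #J * P) ^ 2 =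
        (∏ i, p (u i)) * (#{j ∈ J | ∀ i ∈ S j, u i = g i} : ℝ) ^ 2
          - 2 * (#J * P) * ((∏ i, p (u i)) * #{j ∈ J | ∀ i ∈ S j, u i = g i})
          + (#J * P) ^ 2 * ∏ i, p (u i) := fun u => by
    ring
  rw [sum_congr rfl fun u _ => hexpand u, sum_add_distrib, sum_sub_distrib, ← mul_sum,
    ← mul_sum, sum_prod_mul_card_filter_sq hS hP hp, sum_prod_mul_card_filter hP hp,
    sum_prod_eq_one hp]
  ring

end ProductWeight

theorem Filter.Tendsto.div_natCast_comp_add {f : ℕ → ℝ} {a : ℝ}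
    (h : Tendsto (fun n : ℕ => f n / n) atTop (𝓝 a)) (c : ℕ) :
    Tendsto (fun n : ℕ => f (n + c) / n) atTop (𝓝 a) := by
  have hshift : Tendsto (fun n : ℕ => f (n + c) / (n + c : ℕ)) atTop (𝓝 a) :=
    h.comp (tendsto_add_atTop_nat c)
  have hratio := hshift.div (tendsto_natCast_div_add_atTop (c : ℝ)) one_ne_zero
  rw [div_one] at hratio
  refine hratio.congr' ?_
  filter_upwards [eventually_ne_atTop 0] with n hn
  have : (n : ℝ) + c ≠ 0 := by positivity
  simp only [Pi.div_apply]
  push_cast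
  field_simp

theorem tendsto_of_sum_eq_of_eventually_le {ι β : Type*} [Fintype ι] {l : Filter β}
    {f : ι → β → ℝ} {a : ι → ℝ} (hsum : ∀ᶠ n in l, ∑ i, f i n = ∑ i, a i)
    (hle : ∀ i, ∀ ε > 0, ∀ᶠ n in l, f i n ≤ a i + ε) (i : ι) :
    Tendsto (f i) l (𝓝 (a i)) := by
  rw [tendsto_order]
  refine ⟨fun a' ha' => ?_, fun a' ha' => ?_⟩
  · have hcard : (0 : ℝ) < Fintype.card ι := by exact_mod_cast Fintype.card_pos_iff.2 ⟨i⟩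
    set ε := (a i - a') / (2 * Fintype.card ι)
    have hε : 0 < ε := div_pos (by linarith) (by positivity)
    have hcardε : Fintype.card ι * ε = (a i - a') / 2 := by
      simp only [ε]
      field_simp
    filter_upwards [hsum, eventually_all.2 fun j => hle j ε hε] with n hn hj
    have hslack := single_le_sum (f := fun j => a j + ε - f j n)
      (fun j _ => sub_nonneg.2 (hj j)) (mem_univ i)
    simp only [sum_sub_distrib, sum_add_distrib, hn, sum_const, card_univ, nsmul_eq_mul] at hslack
    linarith
  · filter_upwards [hle i ((a' - a i) / 2) (by linarith)] with n hn
    linarith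

theorem sum_range_mul_eq_sum_range_sum_range {M : Type*} [AddCommMonoid M] (f : ℕ → M)
    (N k : ℕ) :
    ∑ q ∈ range (N * k), f q = ∑ J ∈ range N, ∑ s ∈ range k, f (J * k + s) := by
  induction N with
  | zero => simp
  | succ N ih => rw [add_mul, one_mul, sum_range_add, ih, sum_range_succ]

theorem card_filter_range_le_add (a : ℕ → Prop) [DecidablePred a] (N c : ℕ) :
    #{J ∈ range N | a J} ≤ c + #{J ∈ range N | a (c + J)} :=
  calc #{J ∈ range N | a J} ≤ #{J ∈ range (c + N) | a J} :=
        card_le_card (filter_subset_filter _ (range_subset_range.2 (Nat.le_add_left N c)))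
    _ = #{J ∈ range c | a J} + #{J ∈ range N | a (c + J)} := by
        simp only [card_filter, sum_range_add]
    _ ≤ c + #{J ∈ range N | a (c + J)} := by
        gcongr
        exact (card_filter_le _ _).trans (card_range c).le

-- A hit `J'` lies among `J + 1, …, J + t` for `t` values of `J`, each with `k` values of `s`.
theorem mul_card_filter_range_le (a : ℕ → Prop) [DecidablePred a] {k t : ℕ} (N : ℕ)
    (H : ℕ → ℝ)
    (hH : ∀ J, ∀ s < k, (#{j : Fin t | a (j + 1 + J)} : ℝ) ≤ H (J * k + s)) :
    (t * k * #{J ∈ range N | a J} : ℝ) ≤ t * t * k + ∑ q ∈ range (N * k), H q := by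
  have hshift : ∀ j : Fin t,
      (#{J ∈ range N | a J} : ℝ) ≤ t + #{J ∈ range N | a (j + 1 + J)} :=
    fun j => by
      have := card_filter_range_le_add a N (j + 1)
      have := j.2
      exact_mod_cast (by omega : #{J ∈ range N | a J} ≤ t + #{J ∈ range N | a (j + 1 + J)})
  have hswap : ∑ j : Fin t, (#{J ∈ range N | a (j + 1 + J)} : ℝ) =
      ∑ J ∈ range N, (#{j : Fin t | a (j + 1 + J)} : ℝ) := by
    simp only [natCast_card_filter]
    exact sum_comm
  calc (t * k * #{J ∈ range N | a J} : ℝ)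
        = k * ∑ _j : Fin t, (#{J ∈ range N | a J} : ℝ) := by
        rw [sum_const, card_univ, Fintype.card_fin, nsmul_eq_mul]
        ring
    _ ≤ k * ∑ j : Fin t, (t + (#{J ∈ range N | a (j + 1 + J)} : ℝ)) := by
        gcongr with j
        exact hshift j
    _ = t * t * k +
          ∑ J ∈ range N, ∑ _s ∈ range k, (#{j : Fin t | a (j + 1 + J)} : ℝ) := by
        simp only [sum_add_distrib, hswap, sum_const, card_univ, Fintype.card_fin, card_range,
          nsmul_eq_mul]
        rw [mul_add, mul_sum]
        ring
    _ ≤ t * t * k + ∑ q ∈ range (N * k), H q := by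
        rw [sum_range_mul_eq_sum_range_sum_range]
        gcongr with J _ s hs
        exact hH J s (mem_range.1 hs)

section Window

variable {α : Type*}

def window (x : ℕ → α) (L q : ℕ) : Fin L → α := fun i => x (q + i)

variable {b : ℕ} {x : ℕ → Fin b} {L : ℕ}

theorem occ_add_sub_one (hL : 0 < L) (v : Fin L → Fin b) (n : ℕ) :
    occ x (n + L - 1) v = #{q ∈ range n | window x L q = v} := by
  rw [occ, show n + L - 1 + 1 - L = n by omega]
  simp only [window, funext_iff]

theorem tendsto_card_window_div {v : Fin L → Fin b} {a : ℝ}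
    (hx : Tendsto (fun n : ℕ => (occ x n v : ℝ) / n) atTop (𝓝 a)) (hL : 0 < L) (m : ℕ) :
    Tendsto (fun n : ℕ => (#{q ∈ range n | window x L (m + q) = v} : ℝ) / n) atTop
      (𝓝 a) := by
  have hsplit : ∀ n, (#{q ∈ range n | window x L (m + q) = v} : ℝ) =
      occ x (n + (m + L - 1)) v - #{q ∈ range m | window x L q = v} := fun n => by
    rw [show n + (m + L - 1) = m + n + L - 1 by omega, occ_add_sub_one hL]
    simp only [card_filter, sum_range_add]
    push_cast
    ring
  simp only [hsplit, sub_div]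
  simpa using (hx.div_natCast_comp_add _).sub (tendsto_const_div_atTop_nhds_zero_nat _)

theorem tendsto_sum_window_div {ν : (Fin L → Fin b) → ℝ}
    (hx : ∀ v : Fin L → Fin b,
      Tendsto (fun n : ℕ => (occ x n v : ℝ) / n) atTop (𝓝 (ν v)))
    (hL : 0 < L) (m : ℕ) (F : (Fin L → Fin b) → ℝ) :
    Tendsto (fun n : ℕ => (∑ q ∈ range n, F (window x L (m + q))) / n) atTop
      (𝓝 (∑ v, ν v * F v)) := by
  have hfiber : ∀ n, (∑ q ∈ range n, F (window x L (m + q))) / n =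
      ∑ v, (#{q ∈ range n | window x L (m + q) = v} : ℝ) / n * F v := fun n => by
    rw [← sum_fiberwise' (range n) (fun q => window x L (m + q)) F, sum_div]
    refine sum_congr rfl fun v _ => ?_
    rw [sum_const, nsmul_eq_mul]
    ring
  simp only [hfiber]
  exact tendsto_finsetSum _ fun v _ => (tendsto_card_window_div (hx v) hL m).mul_const _

end Window

section Aligned

variable {α : Type*} {k t : ℕ}

theorem aligned_lt (o : Fin (k + 1)) (j : Fin t) (i : Fin k) :
    (o : ℕ) + j * k + i < (t + 1) * k := by
  have h := Nat.mul_le_mul_right k (Nat.succ_le_of_lt j.2)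
  rw [Nat.succ_mul] at h
  have := o.2
  have := i.2
  rw [Nat.succ_mul]
  omega

def alignedPos (o : Fin (k + 1)) (j : Fin t) (i : Fin k) : Fin ((t + 1) * k) :=
  ⟨o + j * k + i, aligned_lt o j i⟩

theorem alignedPos_inj {o : Fin (k + 1)} {j j' : Fin t} {i i' : Fin k} :
    alignedPos o j i = alignedPos o j' i' ↔ j = j' ∧ i = i' := by
  refine ⟨fun h => ?_, fun ⟨hj, hi⟩ => hj ▸ hi ▸ rfl⟩
  have hk : 0 < k := i.pos
  have h' : (i : ℕ) + j * k = i' + j' * k := by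
    simp only [alignedPos, Fin.ext_iff] at h
    omega
  have hj : (j : ℕ) = j' := by
    simpa [Nat.add_mul_div_right _ _ hk, Nat.div_eq_of_lt i.2, Nat.div_eq_of_lt i'.2]
      using congrArg (· / k) h'
  rw [hj] at h'
  exact ⟨Fin.ext hj, Fin.ext (by omega)⟩

-- one target word for all slots at offset `o`, so that any union of slots is a cylinder
def periodicPattern [NeZero k] (w : Fin k → α) (o : Fin (k + 1)) (i : Fin ((t + 1) * k)) : α :=
  w (Fin.ofNat k (i - o))

theorem periodicPattern_alignedPos [NeZero k] (w : Fin k → α) (o : Fin (k + 1)) (j : Fin t)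
    (i : Fin k) :
    periodicPattern w o (alignedPos o j i) = w i := by
  unfold periodicPattern
  congr 1
  apply Fin.ext
  simp only [alignedPos, Fin.val_ofNat]
  rw [show (o : ℕ) + j * k + i - o = i + j * k by omega, Nat.add_mul_mod_self_right,
    Nat.mod_eq_of_lt i.2]

variable [DecidableEq α]

def alignedCount (w : Fin k → α) (o : Fin (k + 1)) (u : Fin ((t + 1) * k) → α) : ℕ :=
  #{j : Fin t | ∀ i, u (alignedPos o j i) = w i}

noncomputable def alignedEnvelope (w : Fin k → α) (c δ : ℝ) (u : Fin ((t + 1) * k) → α) :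
    ℝ :=
  c + δ + ∑ o, ((alignedCount w o u : ℝ) - c) ^ 2 / δ

theorem alignedCount_le_alignedEnvelope (w : Fin k → α) (o : Fin (k + 1))
    (u : Fin ((t + 1) * k) → α) (c : ℝ) {δ : ℝ} (hδ : 0 < δ) :
    (alignedCount w o u : ℝ) ≤ alignedEnvelope w c δ u := by
  set y := (alignedCount w o u : ℝ) - c
  have hy : y ≤ δ + y ^ 2 / δ := by
    rw [← sub_nonneg, show δ + y ^ 2 / δ - y = ((y - δ / 2) ^ 2 + 3 * δ ^ 2 / 4) / δ by
      field_simp; ring]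
    positivity
  have hterm : y ^ 2 / δ ≤ ∑ o', ((alignedCount w o' u : ℝ) - c) ^ 2 / δ :=
    single_le_sum (f := fun o' => ((alignedCount w o' u : ℝ) - c) ^ 2 / δ)
      (fun _ _ => by positivity) (mem_univ o)
  rw [alignedEnvelope]
  linarith

variable [NeZero k]

theorem sum_prod_mul_alignedCount_sub_sq [Fintype α] {p : α → ℝ} (hp : ∑ a, p a = 1)
    (w : Fin k → α) (o : Fin (k + 1)) :
    ∑ u : Fin ((t + 1) * k) → α,
        (∏ i, p (u i)) * ((alignedCount w o u : ℝ) - t * ∏ i, p (w i)) ^ 2 =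
      t * (∏ i, p (w i) - (∏ i, p (w i)) ^ 2) := by
  have hS : ((univ : Finset (Fin t)) : Set (Fin t)).PairwiseDisjoint
      fun j => univ.image (alignedPos o j) := by
    intro j _ j' _ hne
    simp only [Function.onFun, disjoint_left, mem_image, mem_univ, true_and]
    rintro _ ⟨i, rfl⟩ ⟨i', h⟩
    exact hne (alignedPos_inj.1 h).1.symm
  have hP : ∀ j ∈ (univ : Finset (Fin t)),
      ∏ i ∈ univ.image (alignedPos o j), p (periodicPattern w o i) = ∏ i, p (w i) := by
    intro j _
    rw [prod_image fun i _ i' _ h => (alignedPos_inj.1 h).2]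
    simp only [periodicPattern_alignedPos]
  have hcount : ∀ u : Fin ((t + 1) * k) → α, alignedCount w o u =
      #{j ∈ (univ : Finset (Fin t)) | ∀ i ∈ univ.image (alignedPos o j),
        u i = periodicPattern w o i} := by
    intro u
    simp only [alignedCount, forall_mem_image, mem_univ, forall_const, periodicPattern_alignedPos]
  simp only [hcount]
  have := sum_prod_mul_card_filter_sub_sq hS hP hp
  rw [card_univ, Fintype.card_fin] at this
  convert this

theorem sum_prod_mul_alignedEnvelope [Fintype α] {p : α → ℝ} (hp : ∑ a, p a = 1)
    (w : Fin k → α) (δ : ℝ) :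
    ∑ u : Fin ((t + 1) * k) → α,
        (∏ i, p (u i)) * alignedEnvelope w (t * ∏ i, p (w i)) δ u =
      t * ∏ i, p (w i) + δ + (k + 1) * (t * (∏ i, p (w i) - (∏ i, p (w i)) ^ 2)) / δ := by
  simp only [alignedEnvelope, mul_add, sum_add_distrib, ← sum_mul, sum_prod_eq_one hp, one_mul,
    mul_sum]
  rw [sum_comm]
  simp only [mul_div_assoc', ← sum_div, sum_prod_mul_alignedCount_sub_sq hp, sum_const, card_univ,
    Fintype.card_fin, nsmul_eq_mul]
  push_cast
  ring

theorem sum_prod_mul_alignedEnvelope_le [Fintype α] {p : α → ℝ} (hp : ∑ a, p a = 1)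
    (w : Fin k → α) {η : ℝ} (hη : 0 < η) (ht : k + 1 ≤ t * η ^ 2) :
    ∑ u : Fin ((t + 1) * k) → α,
        (∏ i, p (u i)) * alignedEnvelope w (t * ∏ i, p (w i)) (η * t) u ≤
      t * (∏ i, p (w i) + 2 * η) := by
  set P := ∏ i, p (w i)
  have ht0 : (0 : ℝ) < t := by
    by_contra h
    nlinarith [sq_nonneg η, (Nat.cast_nonneg k : (0 : ℝ) ≤ k)]
  have hvar : (k + 1) * (t * (P - P ^ 2)) / (η * t) ≤ η * t := by
    rw [div_le_iff₀ (by positivity)]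
    have hP : P - P ^ 2 ≤ 1 := by nlinarith [sq_nonneg (P - 1 / 2)]
    calc (k + 1) * (t * (P - P ^ 2)) ≤ (k + 1) * (t * 1) := by gcongr
      _ ≤ (t * η ^ 2) * (t * 1) := by gcongr
      _ = η * t * (η * t) := by ring
  rw [sum_prod_mul_alignedEnvelope hp]
  linarith

end Aligned

theorem mul_card_aligned_le_sum_alignedEnvelope {b : ℕ} (x : ℕ → Fin b) {k : ℕ}
    (t m N : ℕ) (w : Fin k → Fin b) (c : ℝ) {δ : ℝ} (hδ : 0 < δ) :
    (t * k * #{J ∈ range N | ∀ i : Fin k, x (m + J * k + i) = w i} : ℝ) ≤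
      t * t * k +
        ∑ q ∈ range (N * k), alignedEnvelope w c δ (window x ((t + 1) * k) (m + q)) := by
  refine mul_card_filter_range_le _ N _ fun J s hs => le_trans (le_of_eq ?_)
    (alignedCount_le_alignedEnvelope w ⟨k - s, by omega⟩ _ c hδ)
  -- the window at `m + J * k + s` read from offset `k - s` is aligned with `m + kℕ`
  refine congrArg (fun n : ℕ => (n : ℝ)) (congrArg card (filter_congr fun j _ =>
    forall_congr' fun i => ?_))
  have : ((j : ℕ) + 1 + J) * k = j * k + k + J * k := by ring
  simp only [window, alignedPos]
  rw [show m + (J * k + s) + (k - s + j * k + i) = m + (j + 1 + J) * k + i by omega]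

theorem eventually_card_aligned_div_le {b : ℕ} {p : Fin b → ℝ} (hsum : ∑ i, p i = 1)
    {x : ℕ → Fin b} (hx : ∀ r : ℕ, 1 ≤ r → ∀ v : Fin r → Fin b,
      Tendsto (fun n : ℕ => (occ x n v : ℝ) / n) atTop (𝓝 (∏ i, p (v i))))
    {k : ℕ} [NeZero k] (m : ℕ) (w : Fin k → Fin b) {ε : ℝ} (hε : 0 < ε) :
    ∀ᶠ N : ℕ in atTop,
      (((range N).filter fun j => ∀ i : Fin k, x (m + j * k + i) = w i).card : ℝ) / N ≤
        ∏ i, p (w i) + ε := by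
  set P := ∏ i, p (w i)
  set η := ε / 4 with hηε
  have hη : 0 < η := by positivity
  obtain ⟨t, ht⟩ := exists_nat_ge (max 1 ((k + 1) / η ^ 2))
  have ht1 : (1 : ℝ) ≤ t := (le_max_left _ _).trans ht
  have htk : k + 1 ≤ t * η ^ 2 := (div_le_iff₀ (by positivity)).1 ((le_max_right _ _).trans ht)
  have hk : (0 : ℝ) < k := by exact_mod_cast NeZero.pos k
  have hL : 0 < (t + 1) * k := Nat.mul_pos t.succ_pos (NeZero.pos k)
  set F := alignedEnvelope (t := t) w (t * P) (η * t)
  have hEF : ∑ u, (∏ i, p (u i)) * F u ≤ t * (P + 2 * η) :=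
    sum_prod_mul_alignedEnvelope_le hsum w hη htk
  have hNk : Tendsto (fun N : ℕ => N * k) atTop atTop :=
    tendsto_atTop_mono (fun N => Nat.le_mul_of_pos_right N (NeZero.pos k)) tendsto_id
  have hlim := (tendsto_sum_window_div (fun v => hx _ hL v) hL m F).comp hNk
  filter_upwards [hlim.eventually (eventually_le_nhds (lt_add_of_pos_right _ (by positivity :
      0 < η * t))), (tendsto_const_div_atTop_nhds_zero_nat (t : ℝ)).eventually
      (eventually_le_nhds hη), eventually_gt_atTop 0] with N hFN htN hN
  have hN' : (0 : ℝ) < N := by exact_mod_cast hN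
  have hcount := mul_card_aligned_le_sum_alignedEnvelope x t m N w (t * P)
    (by positivity : 0 < η * t)
  rw [Function.comp_apply, div_le_iff₀ (by exact_mod_cast Nat.mul_pos hN (NeZero.pos k))] at hFN
  rw [div_le_iff₀ hN'] at htN ⊢
  push_cast at hFN
  have hFN' : (∑ u, (∏ i, p (u i)) * F u + η * t) * (N * k) ≤
      (t * (P + 2 * η) + η * t) * (N * k) := by
    gcongr
  have : (t : ℝ) * k * #{J ∈ range N | ∀ i : Fin k, x (m + J * k + i) = w i} ≤
      t * k * (t + N * (P + 3 * η)) := by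
    linarith
  refine (le_of_mul_le_mul_left this (by positivity)).trans ?_
  have : ε * N = 4 * (η * N) := by rw [hηε]; ring
  linarith

theorem biased_normal_of_blocks_freq_general (b : ℕ)
    (p : Fin b → ℝ) (hsum : ∑ i, p i = 1) (x : ℕ → Fin b)
    (hx : ∀ r : ℕ, 1 ≤ r → ∀ v : Fin r → Fin b,
      Tendsto (fun n : ℕ => (occ x n v : ℝ) / n) atTop (nhds (∏ i, p (v i)))) :
    ∀ k : ℕ, 1 ≤ k → ∀ m : ℕ, ∀ w : Fin k → Fin b,
      Tendsto
        (fun N : ℕ =>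
          (((Finset.range N).filter (fun j => ∀ i : Fin k, x (m + j * k + i) = w i)).card : ℝ) / N)
        atTop (nhds (∏ i, p (w i))) := by
  intro k hk m w
  have : NeZero k := ⟨by omega⟩
  have hblocks : ∀ᶠ N : ℕ in atTop, ∑ v : Fin k → Fin b,
      (((range N).filter fun j => ∀ i : Fin k, x (m + j * k + i) = v i).card : ℝ) / N =
        ∑ v : Fin k → Fin b, ∏ i, p (v i) := by
    filter_upwards [eventually_gt_atTop 0] with N hN
    have hfiber := card_eq_sum_card_fiberwise (s := range N) (t := univ)
      (f := fun j (i : Fin k) => x (m + j * k + i)) fun _ _ => mem_univ _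
    simp only [funext_iff, card_range] at hfiber
    rw [← sum_div, sum_prod_eq_one hsum, div_eq_one_iff_eq (by positivity), ← Nat.cast_sum]
    exact congrArg Nat.cast hfiber.symm
  exact tendsto_of_sum_eq_of_eventually_le hblocks
    (fun v _ hε => eventually_card_aligned_div_le hsum hx m v hε) w

/-- If every block `v` of length `r ≥ 1` occurs in `x` (counting all overlapping
occurrences) with limiting frequency `∏_{i<r} p_{v i}`, then `x` is biased normal with
respect to `p`: for every `k ≥ 1`, every offset `m`, and every block `w` of length `k`, the
frequency of `w` among the consecutive length-`k` blocks of `x` starting at positions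
`m, m+k, m+2k, …` equals `∏_{i<k} p_{w i}`. -/
theorem biased_normal_of_blocks_freq (b : ℕ) (hb : 2 ≤ b)
    (p : Fin b → ℝ) (hp : ∀ i, 0 < p i) (hsum : ∑ i, p i = 1) (x : ℕ → Fin b)
    (hx : ∀ r : ℕ, 1 ≤ r → ∀ v : Fin r → Fin b,
      Tendsto (fun n : ℕ => (occ x n v : ℝ) / n) atTop (nhds (∏ i, p (v i)))) :
    ∀ k : ℕ, 1 ≤ k → ∀ m : ℕ, ∀ w : Fin k → Fin b,
      Tendsto
        (fun N : ℕ =>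
          (((Finset.range N).filter (fun j => ∀ i : Fin k, x (m + j * k + i) = w i)).card : ℝ) / N)
        atTop (nhds (∏ i, p (w i))) :=
  biased_normal_of_blocks_freq_general b p hsum x hx
end

section
/- Fix an integer base b ≥ 2 and positive real biases p_0, …, p_{b−1} with Σ_{i<b} p_i = 1. Let μ_p be the Bernoulli (infinite product) measure on b^ω with parameters p_0, …, p_{b−1}. Then the set of sequences x ∈ b^ω that are biased normal with respect to p_0, …, p_{b−1} — equivalently, the set of x such that for every r ≥ 1 and every block v of length r, lim_{n→∞} occ(x[0:n−1], v)/n = ∏_{i<r} p_{v(i)} — has μ_p-measure 1. -/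
open Filter Finset MeasureTheory

open ProbabilityTheory Topology

/-!
Occurrences of a block `v` of length `r` at the positions `j, j + r, j + 2 r, …` concern disjoint
windows of coordinates, so under a Bernoulli measure they are independent events of probability
`∏ i, p (v i)`. The strong law of large numbers gives this frequency along every residue class
modulo `r` almost surely, and averaging over the `r` residue classes gives it for all positions.
Countably many blocks only discard a null set.
-/

theorem Finset.sum_range_mul_eq_sum_sum_residues {M : Type*} [AddCommMonoid M] (c : ℕ → M)
    (r N : ℕ) :
    ∑ t ∈ range (r * N), c t = ∑ j ∈ range r, ∑ m ∈ range N, c (j + m * r) := by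
  induction N with
  | zero => simp
  | succ N ih =>
    simp only [Nat.mul_succ, sum_range_add, ih, sum_range_succ, sum_add_distrib]
    exact congrArg _ (sum_congr rfl fun j _ => by rw [Nat.add_comm, Nat.mul_comm])

theorem abs_sum_range_sub_sum_range_le {c : ℕ → ℝ} (hc : ∀ t, |c t| ≤ 1) {a b : ℕ} (hab : a ≤ b) :
    |∑ t ∈ range b, c t - ∑ t ∈ range a, c t| ≤ (b - a : ℕ) := by
  rw [← sum_Ico_eq_sub _ hab, ← Nat.card_Ico a b]
  calc |∑ t ∈ Ico a b, c t| ≤ ∑ t ∈ Ico a b, |c t| := abs_sum_le_sum_abs _ _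
    _ ≤ (Ico a b).card • (1 : ℝ) := sum_le_card_nsmul _ _ _ fun t _ => hc t
    _ = _ := nsmul_one _

theorem tendsto_div_of_abs_sub_le {f g : ℕ → ℝ} {q C : ℝ}
    (hf : Tendsto (fun n => f n / n) atTop (𝓝 q)) (hfg : ∀ n, |g n - f n| ≤ C) :
    Tendsto (fun n => g n / n) atTop (𝓝 q) := by
  have hdiff : Tendsto (fun n : ℕ => (g n - f n) / n) atTop (𝓝 0) := by
    refine squeeze_zero_norm (fun n => ?_) (tendsto_const_div_atTop_nhds_zero_nat C)
    rw [norm_div, Real.norm_natCast]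
    exact div_le_div_of_nonneg_right (hfg n) n.cast_nonneg
  have := hf.add hdiff
  rw [add_zero] at this
  exact this.congr fun n => by ring

theorem tendsto_sum_range_div_of_tendsto_residues {c : ℕ → ℝ} {q : ℝ} {r : ℕ} (hr : 0 < r)
    (hc : ∀ t, |c t| ≤ 1)
    (h : ∀ j < r, Tendsto (fun N : ℕ => (∑ m ∈ range N, c (j + m * r)) / N) atTop (𝓝 q)) :
    Tendsto (fun n : ℕ => (∑ t ∈ range n, c t) / n) atTop (𝓝 q) := by
  have hdiv : Tendsto (· / r) atTop atTop := Nat.tendsto_div_const_atTop hr.ne'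
  have hrem : ∀ n, n - r * (n / r) ≤ r := fun n => by
    have := Nat.div_add_mod n r
    have := Nat.mod_lt n hr
    omega
  have hmod : ∀ n, |((r * (n / r) : ℕ) : ℝ) - n| ≤ r := fun n => by
    rw [abs_sub_comm, ← Nat.cast_sub (Nat.mul_div_le n r), Nat.abs_cast, Nat.cast_le]
    exact hrem n
  have hratio : Tendsto (fun n : ℕ => ((r * (n / r) : ℕ) : ℝ) / n) atTop (𝓝 1) :=
    tendsto_div_of_abs_sub_le (tendsto_const_nhds.congr' <| (eventually_ne_atTop 0).mono
      fun n hn => (div_self (Nat.cast_ne_zero.2 hn)).symm) hmod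
  have hresidues : Tendsto (fun n : ℕ =>
      (∑ j ∈ range r, (∑ m ∈ range (n / r), c (j + m * r)) / (n / r : ℕ)) / r) atTop (𝓝 q) := by
    have := (tendsto_finsetSum (range r) fun j hj => (h j (mem_range.1 hj)).comp hdiv).div_const
      (r : ℝ)
    simpa [hr.ne'] using this
  have hmultiple : Tendsto (fun n : ℕ => (∑ t ∈ range (r * (n / r)), c t) / n) atTop (𝓝 q) := by
    have := hresidues.mul hratio
    rw [mul_one] at this
    refine this.congr' ?_
    filter_upwards [hdiv.eventually_ne_atTop 0] with n hn
    have : ((n / r : ℕ) : ℝ) ≠ 0 := Nat.cast_ne_zero.2 hn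
    rw [sum_range_mul_eq_sum_sum_residues, ← sum_div]
    push_cast
    field_simp
  refine tendsto_div_of_abs_sub_le (C := r) hmultiple fun n => ?_
  calc _ ≤ ((n - r * (n / r) : ℕ) : ℝ) := abs_sum_range_sub_sum_range_le hc (Nat.mul_div_le n r)
    _ ≤ r := Nat.cast_le.2 (hrem n)

theorem abs_indicator_one_le {Ω : Type*} (E : Set Ω) (ω : Ω) :
    |E.indicator (fun _ => (1 : ℝ)) ω| ≤ 1 := by
  simpa using norm_indicator_le_norm_self (s := E) (fun _ => (1 : ℝ)) ω

theorem identDistrib_indicator_const {Ω β : Type*} [MeasurableSpace Ω] [MeasurableSpace β]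
    [Zero β] {μ : Measure Ω} [IsFiniteMeasure μ] {E F : Set Ω} (hE : MeasurableSet E)
    (hF : MeasurableSet F) (h : μ E = μ F) (a : β) :
    IdentDistrib (E.indicator fun _ => a) (F.indicator fun _ => a) μ μ := by
  refine ⟨(measurable_const.indicator hE).aemeasurable,
    (measurable_const.indicator hF).aemeasurable, Measure.ext fun s hs => ?_⟩
  classical
  have hc : μ Eᶜ = μ Fᶜ := by rw [measure_compl hE (measure_ne_top μ E),
    measure_compl hF (measure_ne_top μ F), h]
  rw [Measure.map_apply (measurable_const.indicator hE) hs,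
    Measure.map_apply (measurable_const.indicator hF) hs,
    Set.indicator_const_preimage_eq_union, Set.indicator_const_preimage_eq_union]
  split_ifs <;> simp [h, hc]

theorem ae_tendsto_sum_indicator_div {Ω : Type*} [MeasurableSpace Ω] {μ : Measure Ω}
    [IsProbabilityMeasure μ] {E : ℕ → Set Ω} (hE : ∀ m, MeasurableSet (E m))
    (hindep : iIndepSet E μ) (hμE : ∀ m, μ (E m) = μ (E 0)) :
    ∀ᵐ ω ∂μ, Tendsto (fun N : ℕ => (∑ m ∈ range N, (E m).indicator (fun _ => (1 : ℝ)) ω) / N)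
      atTop (𝓝 (μ.real (E 0))) := by
  have := strong_law_ae_real (fun m => (E m).indicator fun _ => (1 : ℝ))
    ((integrable_const 1).indicator (hE 0))
    (fun m m' hmm' => hindep.iIndepFun_indicator.indepFun hmm')
    (fun m => identDistrib_indicator_const (hE m) (hE 0) (hμE m) 1)
  rwa [integral_indicator_const _ (hE 0), smul_eq_mul, mul_one] at this

def IsBernoulli {α : Type*} [MeasurableSpace α] (μ : Measure (ℕ → α)) (p : α → ℝ) : Prop :=
  ∀ (k : ℕ) (w : Fin k → α), μ {x | ∀ i : Fin k, x i = w i} = ENNReal.ofReal (∏ i, p (w i))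

def occursAt {α : Type*} {r : ℕ} (v : Fin r → α) (t : ℕ) : Set (ℕ → α) :=
  {x | ∀ i : Fin r, x (t + i) = v i}

section Bernoulli

variable {α : Type*} [MeasurableSpace α] [MeasurableSingletonClass α]

theorem measurableSet_forall_apply_eq {ι : Type*} [Countable ι] (g : ι → ℕ) (a : ι → α) :
    MeasurableSet {x : ℕ → α | ∀ i, x (g i) = a i} := by
  rw [Set.ofPred_forall]
  exact .iInter fun i => (measurableSet_singleton (a i)).preimage (measurable_pi_apply (g i))

theorem measurableSet_occursAt {r : ℕ} (v : Fin r → α) (t : ℕ) : MeasurableSet (occursAt v t) :=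
  measurableSet_forall_apply_eq _ v

variable {μ : Measure (ℕ → α)} {p : α → ℝ}

theorem IsBernoulli.measure_forall_mem (hp : ∀ a, 0 ≤ p a) (hμ : IsBernoulli μ p) {N : ℕ}
    (A : Fin N → Finset α) :
    μ {x | ∀ i : Fin N, x i ∈ A i} = ENNReal.ofReal (∏ i, ∑ a ∈ A i, p a) := by
  have hunion : {x : ℕ → α | ∀ i : Fin N, x i ∈ A i} =
      ⋃ w ∈ Fintype.piFinset A, {x | ∀ i : Fin N, x i = w i} := by
    ext x
    simp only [Set.mem_ofPred_eq, Set.mem_iUnion, Fintype.mem_piFinset, exists_prop]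
    exact ⟨fun hx => ⟨fun i => x i, hx, fun i => rfl⟩, fun ⟨w, hw, hx⟩ i => hx i ▸ hw i⟩
  have hdisj : (Fintype.piFinset A : Set (Fin N → α)).PairwiseDisjoint
      fun w => {x : ℕ → α | ∀ i : Fin N, x i = w i} := fun w _ w' _ hne =>
    Set.disjoint_left.2 fun x hx hx' => hne (funext fun i => (hx i).symm.trans (hx' i))
  rw [hunion, measure_biUnion_finset hdisj fun w _ => measurableSet_forall_apply_eq _ w,
    prod_univ_sum, ENNReal.ofReal_sum_of_nonneg fun w _ => prod_nonneg fun i _ => hp _]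
  exact sum_congr rfl fun w _ => hμ N w

variable [Fintype α]

theorem IsBernoulli.measure_forall_eq (hp : ∀ a, 0 ≤ p a) (hsum : ∑ a, p a = 1)
    (hμ : IsBernoulli μ p) (S : Finset ℕ) (f : ℕ → α) :
    μ {x | ∀ s ∈ S, x s = f s} = ENNReal.ofReal (∏ s ∈ S, p (f s)) := by
  obtain ⟨N, hSN⟩ := S.exists_nat_subset_range
  let A : Fin N → Finset α := fun i => if (i : ℕ) ∈ S then {f i} else univ
  have hset : {x : ℕ → α | ∀ s ∈ S, x s = f s} = {x | ∀ i : Fin N, x i ∈ A i} := by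
    ext x
    refine ⟨fun hx i => ?_, fun hx s hs => ?_⟩
    · by_cases hi : (i : ℕ) ∈ S
      · simp [A, hi, hx i hi]
      · simp [A, hi]
    · simpa [A, hs] using hx ⟨s, mem_range.1 (hSN hs)⟩
  rw [hset, hμ.measure_forall_mem hp]
  congr 1
  calc ∏ i, ∑ a ∈ A i, p a = ∏ i : Fin N, if (i : ℕ) ∈ S then p (f i) else 1 := by
        refine prod_congr rfl fun i _ => ?_
        by_cases hi : (i : ℕ) ∈ S <;> simp [A, hi, hsum]
    _ = ∏ s ∈ range N ∩ S, p (f s) := by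
        rw [Fin.prod_univ_eq_prod_range (fun s => if s ∈ S then p (f s) else 1), prod_ite_mem]
    _ = ∏ s ∈ S, p (f s) := by rw [inter_eq_right.2 hSN]

theorem IsBernoulli.measure_biInter_occursAt (hp : ∀ a, 0 ≤ p a) (hsum : ∑ a, p a = 1)
    (hμ : IsBernoulli μ p) {r : ℕ} (hr : 0 < r) (v : Fin r → α) (j : ℕ) (T : Finset ℕ) :
    μ (⋂ m ∈ T, occursAt v (j + m * r)) = ENNReal.ofReal ((∏ i, p (v i)) ^ T.card) := by
  let window : ℕ × Fin r → ℕ := fun q => j + q.1 * r + q.2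
  have hdivmod : ∀ q, (window q - j) / r = q.1 ∧ (window q - j) % r = q.2 := fun q =>
    (Nat.div_mod_unique hr).2 ⟨by simp only [window]; rw [Nat.mul_comm r]; omega, q.2.isLt⟩
  have hwindow : window.Injective := fun q q' h => by
    obtain ⟨h1, h2⟩ := hdivmod q
    obtain ⟨h1', h2'⟩ := hdivmod q'
    rw [h] at h1 h2
    exact Prod.ext (h1.symm.trans h1') (Fin.ext (h2.symm.trans h2'))
  -- one sequence that carries a copy of `v` on every window `[j + m r, j + (m + 1) r)`
  let f : ℕ → α := fun s => v ⟨(s - j) % r, Nat.mod_lt _ hr⟩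
  have hf : ∀ q, f (window q) = v q.2 := fun q => congrArg v (Fin.ext (hdivmod q).2)
  have hset : ⋂ m ∈ T, occursAt v (j + m * r) =
      {x | ∀ s ∈ (T ×ˢ univ).image window, x s = f s} := by
    ext x
    simp only [Set.mem_iInter, occursAt, Set.mem_ofPred_eq, mem_image, mem_product, mem_univ,
      and_true, forall_exists_index, and_imp]
    refine ⟨fun hx s q hq hs => ?_, fun hx m hm i => ?_⟩
    · rw [← hs, hf]; exact hx q.1 hq q.2
    · rw [← hf (m, i)]; exact hx _ (m, i) hm rfl
  rw [hset, hμ.measure_forall_eq hp hsum, prod_image hwindow.injOn, prod_product]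
  simp only [hf, prod_const]

theorem IsBernoulli.measure_occursAt (hp : ∀ a, 0 ≤ p a) (hsum : ∑ a, p a = 1)
    (hμ : IsBernoulli μ p) {r : ℕ} (hr : 0 < r) (v : Fin r → α) (t : ℕ) :
    μ (occursAt v t) = ENNReal.ofReal (∏ i, p (v i)) := by
  simpa using hμ.measure_biInter_occursAt hp hsum hr v t {0}

theorem IsBernoulli.iIndepSet_occursAt (hp : ∀ a, 0 ≤ p a)
    (hsum : ∑ a, p a = 1) (hμ : IsBernoulli μ p) {r : ℕ} (hr : 0 < r) (v : Fin r → α) (j : ℕ) :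
    iIndepSet (fun m => occursAt v (j + m * r)) μ := by
  refine (iIndepSet_iff_meas_biInter fun m => measurableSet_occursAt v _).2 fun T => ?_
  rw [hμ.measure_biInter_occursAt hp hsum hr, prod_congr rfl fun m _ =>
    hμ.measure_occursAt hp hsum hr v _, prod_const,
    ENNReal.ofReal_pow (prod_nonneg fun i _ => hp _)]

theorem IsBernoulli.ae_tendsto_sum_indicator_occursAt [IsProbabilityMeasure μ]
    (hp : ∀ a, 0 ≤ p a) (hsum : ∑ a, p a = 1) (hμ : IsBernoulli μ p) {r : ℕ} (hr : 0 < r)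
    (v : Fin r → α) :
    ∀ᵐ x ∂μ, Tendsto
      (fun n : ℕ => (∑ t ∈ range n, (occursAt v t).indicator (fun _ => (1 : ℝ)) x) / n)
      atTop (𝓝 (∏ i, p (v i))) := by
  have hresidues : ∀ᵐ x ∂μ, ∀ j, Tendsto (fun N : ℕ =>
      (∑ m ∈ range N, (occursAt v (j + m * r)).indicator (fun _ => (1 : ℝ)) x) / N)
      atTop (𝓝 (∏ i, p (v i))) := ae_all_iff.2 fun j => by
    have := ae_tendsto_sum_indicator_div (fun m => measurableSet_occursAt v _)
      (hμ.iIndepSet_occursAt hp hsum hr v j)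
      (fun m => by simp only [hμ.measure_occursAt hp hsum hr])
    rwa [measureReal_def, hμ.measure_occursAt hp hsum hr,
      ENNReal.toReal_ofReal (prod_nonneg fun i _ => hp _)] at this
  filter_upwards [hresidues] with x hx
  exact tendsto_sum_range_div_of_tendsto_residues hr (fun t => abs_indicator_one_le _ x)
    fun j _ => hx j

end Bernoulli

theorem occ_eq_sum_indicator {b r : ℕ} (x : ℕ → Fin b) (n : ℕ) (v : Fin r → Fin b) :
    (occ x n v : ℝ) = ∑ t ∈ range (n + 1 - r), (occursAt v t).indicator (fun _ => (1 : ℝ)) x := by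
  simp only [occ, natCast_card_filter, Set.indicator_apply, occursAt, Set.mem_ofPred_eq]

theorem IsBernoulli.ae_tendsto_occ_div {b : ℕ} {μ : Measure (ℕ → Fin b)} [IsProbabilityMeasure μ]
    {p : Fin b → ℝ} (hp : ∀ a, 0 ≤ p a) (hsum : ∑ a, p a = 1) (hμ : IsBernoulli μ p) {r : ℕ}
    (hr : 0 < r) (v : Fin r → Fin b) :
    ∀ᵐ x ∂μ, Tendsto (fun n : ℕ => (occ x n v : ℝ) / n) atTop (𝓝 (∏ i, p (v i))) := by
  filter_upwards [hμ.ae_tendsto_sum_indicator_occursAt hp hsum hr v] with x hx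
  simp only [occ_eq_sum_indicator]
  refine tendsto_div_of_abs_sub_le (C := r) hx fun n => ?_
  rw [abs_sub_comm]
  calc _ ≤ ((n - (n + 1 - r) : ℕ) : ℝ) :=
        abs_sum_range_sub_sum_range_le (fun t => abs_indicator_one_le _ x) (by omega)
    _ ≤ r := Nat.cast_le.2 (by omega)

theorem biased_normal_full_measure_general (b : ℕ)
    (p : Fin b → ℝ) (hp : ∀ i, 0 < p i) (hsum : ∑ i, p i = 1)
    (μ : Measure (ℕ → Fin b)) [IsProbabilityMeasure μ]
    (hμ : ∀ (k : ℕ) (w : Fin k → Fin b),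
      μ {x | ∀ i : Fin k, x (i : ℕ) = w i} = ENNReal.ofReal (∏ i, p (w i))) :
    μ {x | ∀ r : ℕ, 1 ≤ r → ∀ v : Fin r → Fin b,
        Tendsto (fun n : ℕ => (occ x n v : ℝ) / n) atTop (nhds (∏ i, p (v i)))} = 1 := by
  have hae : ∀ᵐ x ∂μ, ∀ r : ℕ, 1 ≤ r → ∀ v : Fin r → Fin b,
      Tendsto (fun n : ℕ => (occ x n v : ℝ) / n) atTop (𝓝 (∏ i, p (v i))) :=
    (ae_ball_iff (S := {r | 1 ≤ r}) (Set.to_countable _)).2 fun r hr =>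
      ae_all_iff.2 (IsBernoulli.ae_tendsto_occ_div (fun i => (hp i).le) hsum hμ hr)
  rw [measure_congr (eventuallyEq_univ.2 hae), measure_univ]

/-- **Almost every sequence is biased normal.** Fix a base `b ≥ 2` and positive biases `p`
summing to `1`.  Let `μ` be the Bernoulli measure on `b^ω`, i.e. the probability measure
giving each cylinder `[w]`, `w : Fin k → Fin b`, measure `∏_{i<k} p_{w i}` (this determines
the infinite product measure uniquely).  Then the set of sequences that are biased normal
with respect to `p` — equivalently, such that every block `v` of length `r ≥ 1` occurs with
limiting frequency `∏_{i<r} p_{v i}` — has `μ`-measure `1`. -/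
theorem biased_normal_full_measure (b : ℕ) (hb : 2 ≤ b)
    (p : Fin b → ℝ) (hp : ∀ i, 0 < p i) (hsum : ∑ i, p i = 1)
    (μ : Measure (ℕ → Fin b)) [IsProbabilityMeasure μ]
    (hμ : ∀ (k : ℕ) (w : Fin k → Fin b),
      μ {x | ∀ i : Fin k, x (i : ℕ) = w i} = ENNReal.ofReal (∏ i, p (w i))) :
    μ {x | ∀ r : ℕ, 1 ≤ r → ∀ v : Fin r → Fin b,
        Tendsto (fun n : ℕ => (occ x n v : ℝ) / n) atTop (nhds (∏ i, p (v i)))} = 1 :=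
  biased_normal_full_measure_general b p hp hsum μ hμ
end

section
/- Fix an integer base n ≥ 2 and positive rational biases p_0, …, p_{n−1} summing to 1, and let d be a positive integer such that each p_i·d is a positive integer a_i (so Σ_{i<n} a_i = d, e.g., d is the least common multiple of the denominators of the p_i). Let g : {0,…,d−1} → {0,…,n−1} be any map such that for each digit i < n, #{ j < d : g(j) = i } = a_i. Let ν : ℕ → {0,…,d−1} be a sequence that is normal in base d, i.e., for every ℓ ≥ 1 and every block u of length ℓ in base d, lim_{k→∞} occ(ν[0:k−1], u)/k = 1/d^ℓ. Define β : ℕ → {0,…,n−1} by β(m) = g(ν(m)). Then β is biased normal with respect to p_0, …, p_{n−1}: for every ℓ ≥ 1 and every block w of length ℓ in base n, lim_{k→∞} occ(β[0:k−1], w)/k = ∏_{i<ℓ} p_{w(i)}. -/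
/-!
An occurrence of a block `w` in `g ∘ ν` is exactly an occurrence in `ν` of one of the
`∏ i, a (w i)` base-`d` blocks that `g` maps letterwise onto `w`. Summing their limiting
frequencies `1 / d ^ ℓ` gives `∏ i, a (w i) / d = ∏ i, p (w i)`.
-/

open Filter Finset

theorem occ_comp_eq_sum {b c r : ℕ} (f : Fin b → Fin c) (x : ℕ → Fin b) (k : ℕ)
    (w : Fin r → Fin c) :
    occ (f ∘ x) k w = ∑ u ∈ Fintype.piFinset fun i => {j | f j = w i}, occ x k u := by
  unfold occ
  rw [card_eq_sum_card_fiberwise (f := fun m (i : Fin r) => x (m + i))]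
  · refine sum_congr rfl fun u hu => congrArg card ?_
    simp only [Fintype.mem_piFinset, mem_filter, mem_univ, true_and] at hu
    rw [filter_filter]
    refine filter_congr fun m _ => ⟨fun ⟨_, hm⟩ => (funext_iff.1 hm ·), fun hm => ?_⟩
    exact ⟨fun i => by rw [Function.comp_apply, hm, hu], funext hm⟩
  · intro m hm
    simp_all

theorem tendsto_occ_comp_div {b c r : ℕ} (f : Fin b → Fin c) {x : ℕ → Fin b}
    (hx : ∀ u : Fin r → Fin b,
      Tendsto (fun k : ℕ => (occ x k u : ℝ) / k) atTop (nhds (1 / (b : ℝ) ^ r)))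
    (w : Fin r → Fin c) :
    Tendsto (fun k : ℕ => (occ (f ∘ x) k w : ℝ) / k) atTop
      (nhds (∏ i, (#{j | f j = w i} : ℝ) / b)) := by
  have h := tendsto_finsetSum (Fintype.piFinset fun i => {j | f j = w i}) fun u _ => hx u
  rw [sum_const, Fintype.card_piFinset, nsmul_eq_mul, ← div_eq_mul_one_div] at h
  push_cast at h
  rw [prod_div_distrib, prod_const, card_univ, Fintype.card_fin]
  refine h.congr fun k => ?_
  rw [occ_comp_eq_sum, Nat.cast_sum, sum_div]

theorem construction_biased_normal_general (n : ℕ)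
    (p : Fin n → ℚ)
    (d : ℕ) (hd : 0 < d) (a : Fin n → ℕ)
    (ha : ∀ i, p i * (d : ℚ) = (a i : ℚ))
    (g : Fin d → Fin n)
    (hg : ∀ i : Fin n, (univ.filter (fun j : Fin d => g j = i)).card = a i)
    (ν : ℕ → Fin d)
    (hν : ∀ ℓ : ℕ, 1 ≤ ℓ → ∀ u : Fin ℓ → Fin d,
      Tendsto (fun k : ℕ => (occ ν k u : ℝ) / k) atTop (nhds (1 / (d : ℝ) ^ ℓ)))
    (β : ℕ → Fin n) (hβ : ∀ m, β m = g (ν m)) :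
    ∀ ℓ : ℕ, 1 ≤ ℓ → ∀ w : Fin ℓ → Fin n,
      Tendsto (fun k : ℕ => (occ β k w : ℝ) / k) atTop (nhds (∏ i, (p (w i) : ℝ))) := by
  intro ℓ hℓ w
  obtain rfl : β = g ∘ ν := funext hβ
  have hpa : ∀ i, (a i : ℝ) / d = p i := fun i => by
    rw [div_eq_iff (by positivity)]
    exact_mod_cast (ha i).symm
  simpa [hg, hpa] using tendsto_occ_comp_div g (hν ℓ hℓ) w

/-- **Construction of biased normal sequences.** Fix a base `n ≥ 2` and positive rational
biases `p₀, …, p_{n-1}` summing to `1`, and a positive integer `d` such that each `p i * d`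
is a positive integer `a i`.  Let `g : Fin d → Fin n` be a map taking the value `i` exactly
`a i` times, and let `ν : ℕ → Fin d` be normal in base `d` (every block `u` of length
`ℓ ≥ 1` occurs in `ν` with limiting frequency `1 / d^ℓ`).  Then `β := g ∘ ν` is biased
normal with respect to `p`: every block `w` of length `ℓ ≥ 1` in base `n` occurs in `β`
with limiting frequency `∏_{i<ℓ} p_{w i}`. -/
theorem construction_biased_normal (n : ℕ) (hn : 2 ≤ n)
    (p : Fin n → ℚ) (hp : ∀ i, 0 < p i) (hsum : ∑ i, p i = 1)
    (d : ℕ) (hd : 0 < d) (a : Fin n → ℕ) (ha_pos : ∀ i, 0 < a i)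
    (ha : ∀ i, p i * (d : ℚ) = (a i : ℚ))
    (g : Fin d → Fin n)
    (hg : ∀ i : Fin n, (univ.filter (fun j : Fin d => g j = i)).card = a i)
    (ν : ℕ → Fin d)
    (hν : ∀ ℓ : ℕ, 1 ≤ ℓ → ∀ u : Fin ℓ → Fin d,
      Tendsto (fun k : ℕ => (occ ν k u : ℝ) / k) atTop (nhds (1 / (d : ℝ) ^ ℓ)))
    (β : ℕ → Fin n) (hβ : ∀ m, β m = g (ν m)) :
    ∀ ℓ : ℕ, 1 ≤ ℓ → ∀ w : Fin ℓ → Fin n,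
      Tendsto (fun k : ℕ => (occ β k w : ℝ) / k) atTop (nhds (∏ i, (p (w i) : ℝ))) :=
  construction_biased_normal_general n p d hd a ha g hg ν hν β hβ
end

section
/- Fix an integer base b ≥ 2, positive real biases p_0, …, p_{b−1} with Σ_{i<b} p_i = 1, and integers r ≥ 1 and N ≥ r. Fix a block v of length r in base b and a real ε with 0 < ε < min over all blocks w of length r of ∏_{i<r} p_{w(i)}. Let B be the set of blocks w of length N in base b such that for some residue m with 0 ≤ m < r, |R_m(w, v) − (1/r)·(N − r + 1)·∏_{i<r} p_{v(i)}| ≥ ε·(N − r + 1), where R_m(w, v) is the number of indices n with 0 ≤ n ≤ N − r, n ≡ m (mod r), and w(n+i) = v(i) for all i < r. Then the Bernoulli measure of the union of the cylinders of the blocks in B tends to 0 as N → ∞; in particular, for all sufficiently large N this measure is less than ε. -/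
/-!
For a fixed residue `m`, the occurrence indicators of `v` at the starting positions
`s ≡ m (mod r)` read pairwise disjoint windows of the word, so under the product measure they
are pairwise independent, each with mean `q = ∏ i, p (v i)`.  Hence `R_m` has variance at most
`(N - r + 1) / 4`, and its mean `#{s ≡ m} · q` is within `1` of `(N - r + 1) q / r`.  Chebyshev's
inequality bounds the probability of an `ε (N - r + 1)`-deviation by `O(1 / (ε² N))` for each
residue, and a union bound over the `r` residues gives the limit `0`.
-/

open Filter Finset MeasureTheory ProbabilityTheory

section Windows

variable {α : Type*} {N r : ℕ}

def OccursAt (v : Fin r → α) (s : ℕ) (w : Fin N → α) : Prop :=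
  ∀ i : Fin r, ∀ h : s + (i : ℕ) < N, w ⟨s + i, h⟩ = v i

def windowPos {s : ℕ} (hs : s + r ≤ N) (i : Fin r) : Fin N := ⟨s + i, by omega⟩

lemma windowPos_injective {s : ℕ} (hs : s + r ≤ N) : Function.Injective (windowPos hs) :=
  fun i j h => Fin.ext (by simpa [windowPos] using h)

lemma setOf_occursAt_eq_preimage {v : Fin r → α} {s : ℕ} (hs : s + r ≤ N) :
    {w : Fin N → α | OccursAt v s w} = (· ∘ windowPos hs) ⁻¹' {v} := by
  ext w
  simp only [Set.mem_ofPred_eq, OccursAt, Set.mem_preimage, Set.mem_singleton_iff, funext_iff,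
    Function.comp_apply, windowPos]
  exact forall_congr' fun i => ⟨fun h => h _, fun h _ => h⟩

lemma disjoint_image_windowPos {s t : ℕ} (hs : s + r ≤ N) (ht : t + r ≤ N)
    (hst : s + r ≤ t ∨ t + r ≤ s) :
    Disjoint (univ.image (windowPos hs)) (univ.image (windowPos ht)) := by
  simp only [disjoint_left, mem_image, mem_univ, true_and, not_exists, forall_exists_index]
  rintro _ i rfl j h
  have := congrArg Fin.val h
  simp only [windowPos] at this
  omega

lemma add_le_or_add_le_of_mod_eq {s t : ℕ} (hst : s ≠ t) (hmod : s % r = t % r) :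
    s + r ≤ t ∨ t + r ≤ s := by
  rcases Nat.lt_or_gt_of_ne hst with h | h
  · have := Nat.le_of_dvd (by omega) ((Nat.modEq_iff_dvd' h.le).mp hmod)
    omega
  · have := Nat.le_of_dvd (by omega) ((Nat.modEq_iff_dvd' h.le).mp hmod.symm)
    omega

noncomputable def windowIndicator (v : Fin r → α) (s : ℕ) : (Fin N → α) → ℝ :=
  {w | OccursAt v s w}.indicator 1

lemma windowIndicator_eq_comp {v : Fin r → α} {s : ℕ} (hs : s + r ≤ N) :
    windowIndicator (N := N) v s =
      ({v} : Set (Fin r → α)).indicator 1 ∘ (· ∘ windowPos hs) := by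
  rw [windowIndicator, setOf_occursAt_eq_preimage hs]
  ext w
  exact Set.indicator_comp_right (g := (1 : (Fin r → α) → ℝ)) _

lemma windowIndicator_mem_Icc (v : Fin r → α) (s : ℕ) (w : Fin N → α) :
    windowIndicator v s w ∈ Set.Icc (0 : ℝ) 1 := by
  unfold windowIndicator
  by_cases h : w ∈ {w | OccursAt v s w} <;> simp [h]

-- Unfolds to the instance inferred for the unfolded predicate, so that `occurrenceCount` is
-- definitionally the count appearing in the theorem.
instance [DecidableEq α] (v : Fin r → α) (s : ℕ) (w : Fin N → α) :
    Decidable (OccursAt v s w) :=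
  inferInstanceAs (Decidable (∀ i : Fin r, ∀ h : s + (i : ℕ) < N, w ⟨s + i, h⟩ = v i))

-- The paper's `R_m(w, v)`.
def occurrenceCount [DecidableEq α] (v : Fin r → α) (m : ℕ) (w : Fin N → α) : ℕ :=
  #{s ∈ range (N + 1 - r) | s % r = m ∧ OccursAt v s w}

lemma occurrenceCount_eq_sum_windowIndicator [DecidableEq α] (v : Fin r → α) (m : ℕ)
    (w : Fin N → α) :
    (occurrenceCount v m w : ℝ) =
      ∑ s ∈ range (N + 1 - r) with s % r = m, windowIndicator v s w := by
  rw [occurrenceCount, ← filter_filter, natCast_card_filter]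
  simp [windowIndicator, Set.indicator_apply]

end Windows

lemma abs_card_filter_mod_eq_sub_div_le {M m r : ℕ} (hm : m < r) :
    |(#{s ∈ range M | s % r = m} : ℝ) - M / r| ≤ 1 := by
  have hr : 0 < r := by omega
  have hcount : #{s ∈ range M | s % r = m} = M / r + if m % r < M % r then 1 else 0 := by
    rw [← Nat.count_modEq_card _ hr, Nat.count_eq_card_filter_range]
    simp only [Nat.ModEq, Nat.mod_eq_of_lt hm]
  have hfloor : ((M / r : ℕ) : ℝ) ≤ M / r ∧ (M : ℝ) / r < (M / r : ℕ) + 1 := by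
    rw [← Nat.floor_div_eq_div (K := ℝ)]
    exact ⟨Nat.floor_le (by positivity), Nat.lt_floor_add_one _⟩
  rw [abs_le, hcount]
  split_ifs <;> push_cast <;> constructor <;> linarith [hfloor.1, hfloor.2]

section Bernoulli

variable {α : Type*} [MeasurableSpace α] (μ : Measure α) [IsProbabilityMeasure μ] {N r : ℕ}

lemma iIndepFun_eval_pi :
    iIndepFun (fun (j : Fin N) (w : Fin N → α) => w j) (Measure.pi fun _ => μ) :=
  iIndepFun_pi (X := fun _ => id) fun _ => aemeasurable_id

variable [MeasurableSingletonClass α] [Countable α]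

lemma measurePreserving_comp_windowPos {s : ℕ} (hs : s + r ≤ N) :
    MeasurePreserving (fun w : Fin N → α => w ∘ windowPos hs)
      (Measure.pi fun _ => μ) (Measure.pi fun _ => μ) := by
  refine ⟨Measurable.of_discrete, ?_⟩
  have := ((iIndepFun_eval_pi μ).precomp (windowPos_injective hs)).map_fun_eq_pi_map
    fun _ => (measurable_pi_apply _).aemeasurable
  refine this.trans (congrArg Measure.pi (funext fun i => ?_))
  exact (measurePreserving_eval _ _).map_eq

lemma indepFun_comp_windowPos {s t : ℕ} (hs : s + r ≤ N) (ht : t + r ≤ N)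
    (hst : s + r ≤ t ∨ t + r ≤ s) :
    IndepFun (fun w : Fin N → α => w ∘ windowPos hs) (fun w => w ∘ windowPos ht)
      (Measure.pi fun _ => μ) := by
  have h := ((iIndepFun_eval_pi μ).indepFun_finset _ _ (disjoint_image_windowPos hs ht hst)
    fun _ => measurable_pi_apply _).comp
    (φ := fun u i => u ⟨windowPos hs i, mem_image_of_mem _ (mem_univ i)⟩)
    (ψ := fun u i => u ⟨windowPos ht i, mem_image_of_mem _ (mem_univ i)⟩)
    Measurable.of_discrete Measurable.of_discrete
  exact h

lemma measureReal_occursAt {s : ℕ} (hs : s + r ≤ N) (v : Fin r → α) :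
    (Measure.pi fun _ : Fin N => μ).real {w | OccursAt v s w} = ∏ i, μ.real {v i} := by
  rw [setOf_occursAt_eq_preimage hs, measureReal_def,
    (measurePreserving_comp_windowPos μ hs).measure_preimage
      (measurableSet_singleton v).nullMeasurableSet,
    Measure.pi_singleton, ENNReal.toReal_prod]
  rfl

variable {v : Fin r → α}

lemma integral_windowIndicator {s : ℕ} (hs : s + r ≤ N) :
    ∫ w, windowIndicator v s w ∂(Measure.pi fun _ : Fin N => μ) = ∏ i, μ.real {v i} :=
  (integral_indicator_one MeasurableSet.of_discrete).trans (measureReal_occursAt μ hs v)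

lemma memLp_windowIndicator (s : ℕ) :
    MemLp (windowIndicator (N := N) v s) 2 (Measure.pi fun _ => μ) :=
  MemLp.of_bound Measurable.of_discrete.aestronglyMeasurable 1 <| ae_of_all _ fun w => by
    obtain ⟨h0, h1⟩ := windowIndicator_mem_Icc v s w
    rwa [Real.norm_of_nonneg h0]

lemma variance_windowIndicator_le (s : ℕ) :
    Var[windowIndicator (N := N) v s; Measure.pi fun _ => μ] ≤ 1 / 4 := by
  refine (variance_le_sq_of_bounded (ae_of_all _ (windowIndicator_mem_Icc v s))
    Measurable.of_discrete.aemeasurable).trans_eq ?_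
  norm_num

lemma indepFun_windowIndicator {s t : ℕ} (hs : s + r ≤ N) (ht : t + r ≤ N)
    (hst : s + r ≤ t ∨ t + r ≤ s) :
    IndepFun (windowIndicator (N := N) v s) (windowIndicator v t) (Measure.pi fun _ => μ) := by
  rw [windowIndicator_eq_comp hs, windowIndicator_eq_comp ht]
  exact (indepFun_comp_windowPos μ hs ht hst).comp Measurable.of_discrete Measurable.of_discrete

section SameResidue

variable {T : Finset ℕ} (hT : ∀ s ∈ T, s + r ≤ N)
include hT

lemma integral_sum_windowIndicator :
    ∫ w, ∑ s ∈ T, windowIndicator v s w ∂(Measure.pi fun _ : Fin N => μ)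
      = #T * ∏ i, μ.real {v i} := by
  rw [integral_finsetSum _ fun s _ => (memLp_windowIndicator μ s).integrable one_le_two,
    sum_congr rfl fun s hs => integral_windowIndicator μ (hT s hs), sum_const, nsmul_eq_mul]

lemma variance_sum_windowIndicator_le (hmod : ∀ s ∈ T, ∀ t ∈ T, s % r = t % r) :
    Var[∑ s ∈ T, windowIndicator (N := N) v s; Measure.pi fun _ => μ] ≤ #T / 4 := by
  rw [IndepFun.variance_sum (fun s _ => memLp_windowIndicator μ s) fun s hs t ht hst =>
    indepFun_windowIndicator μ (hT s hs) (hT t ht)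
      (add_le_or_add_le_of_mod_eq hst (hmod s hs t ht))]
  calc ∑ s ∈ T, Var[windowIndicator v s; Measure.pi fun _ => μ]
        ≤ ∑ _s ∈ T, (1 / 4 : ℝ) :=
        sum_le_sum fun s _ => variance_windowIndicator_le μ s
    _ = #T / 4 := by rw [sum_const, nsmul_eq_mul]; ring

lemma measureReal_deviation_sum_windowIndicator_le (hmod : ∀ s ∈ T, ∀ t ∈ T, s % r = t % r)
    {c : ℝ} (hc : 0 < c) :
    (Measure.pi fun _ : Fin N => μ).real
        {w | c ≤ |∑ s ∈ T, windowIndicator v s w - #T * ∏ i, μ.real {v i}|}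
      ≤ #T / (4 * c ^ 2) := by
  have hX : MemLp (∑ s ∈ T, windowIndicator (N := N) v s) 2 (Measure.pi fun _ => μ) :=
    memLp_finsetSum' _ fun s _ => memLp_windowIndicator μ s
  have hcheb := meas_ge_le_variance_div_sq hX hc
  simp only [Finset.sum_apply, ← integral_sum_windowIndicator μ hT] at hcheb ⊢
  rw [measureReal_def]
  refine ENNReal.toReal_le_of_le_ofReal (by positivity)
    (hcheb.trans (ENNReal.ofReal_le_ofReal ?_))
  calc Var[∑ s ∈ T, windowIndicator v s; Measure.pi fun _ => μ] / c ^ 2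
        ≤ #T / 4 / c ^ 2 := by
        gcongr; exact variance_sum_windowIndicator_le μ hT hmod
    _ = #T / (4 * c ^ 2) := by ring

end SameResidue

variable [DecidableEq α]

lemma measureReal_occurrenceCount_deviation_le {m : ℕ} (hm : m < r) {ε : ℝ}
    (hεM : 2 ≤ ε * (N + 1 - r : ℕ)) :
    (Measure.pi fun _ : Fin N => μ).real {w | ε * (N + 1 - r : ℕ) ≤
        |(occurrenceCount v m w : ℝ) - (N + 1 - r : ℕ) * (∏ i, μ.real {v i}) / r|}
      ≤ 1 / (ε ^ 2 * (N + 1 - r : ℕ)) := by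
  set M : ℕ := N + 1 - r
  set q := ∏ i, μ.real {v i}
  set T := {s ∈ range M | s % r = m}
  have hT : ∀ s ∈ T, s + r ≤ N := fun s hs => by
    have := mem_range.1 (mem_filter.1 hs).1
    omega
  have hmod : ∀ s ∈ T, ∀ t ∈ T, s % r = t % r := fun s hs t ht =>
    (mem_filter.1 hs).2.trans (mem_filter.1 ht).2.symm
  have hq0 : 0 ≤ q := prod_nonneg fun _ _ => measureReal_nonneg
  have hq1 : q ≤ 1 := prod_le_one (fun _ _ => measureReal_nonneg) fun _ _ => measureReal_le_one
  have hmean : |#T * q - M * q / r| ≤ 1 := by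
    rw [show (#T : ℝ) * q - M * q / r = (#T - M / r) * q by ring, abs_mul, abs_of_nonneg hq0]
    exact mul_le_one₀ (abs_card_filter_mod_eq_sub_div_le hm) hq0 hq1
  have hM : (M : ℝ) ≠ 0 := by rintro h; rw [h] at hεM; linarith
  have hε : ε ≠ 0 := by rintro rfl; linarith
  have hTM : (#T : ℝ) ≤ M := by exact_mod_cast (card_filter_le _ _).trans (card_range M).le
  calc _ ≤ (Measure.pi fun _ : Fin N => μ).real
        {w | ε * M / 2 ≤ |∑ s ∈ T, windowIndicator v s w - #T * q|} := by
        refine measureReal_mono fun w hw => ?_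
        simp only [Set.mem_ofPred_eq, occurrenceCount_eq_sum_windowIndicator] at hw ⊢
        linarith [abs_sub_le (∑ s ∈ T, windowIndicator v s w) (#T * q) (M * q / r)]
    _ ≤ #T / (4 * (ε * M / 2) ^ 2) :=
        measureReal_deviation_sum_windowIndicator_le μ hT hmod (by linarith)
    _ ≤ M / (4 * (ε * M / 2) ^ 2) := by gcongr
    _ = 1 / (ε ^ 2 * M) := by field_simp; ring

lemma measureReal_exists_occurrenceCount_deviation_le {ε : ℝ}
    (hεM : 2 ≤ ε * (N + 1 - r : ℕ)) :
    (Measure.pi fun _ : Fin N => μ).real {w | ∃ m < r, ε * (N + 1 - r : ℕ) ≤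
        |(occurrenceCount v m w : ℝ) - (N + 1 - r : ℕ) * (∏ i, μ.real {v i}) / r|}
      ≤ r / ε ^ 2 / (N + 1 - r : ℕ) := by
  calc _ ≤ ∑ m ∈ range r, (Measure.pi fun _ : Fin N => μ).real
        {w | ε * (N + 1 - r : ℕ) ≤
          |(occurrenceCount v m w : ℝ) - (N + 1 - r : ℕ) * (∏ i, μ.real {v i}) / r|} := by
        refine (measureReal_mono (fun w hw => ?_) (measure_ne_top _ _)).trans
          (measureReal_biUnion_finset_le _ _)
        obtain ⟨m, hm, hw⟩ := hw
        exact Set.mem_biUnion (mem_range.2 hm) hw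
    _ ≤ ∑ _m ∈ range r, 1 / (ε ^ 2 * (N + 1 - r : ℕ)) :=
        sum_le_sum fun m hm => measureReal_occurrenceCount_deviation_le μ (mem_range.1 hm) hεM
    _ = r / ε ^ 2 / (N + 1 - r : ℕ) := by rw [sum_const, card_range, nsmul_eq_mul]; ring

theorem tendsto_measureReal_exists_occurrenceCount_deviation (v : Fin r → α) {ε : ℝ}
    (hε : 0 < ε) :
    Tendsto (fun N => (Measure.pi fun _ : Fin N => μ).real {w | ∃ m < r,
        ε * (N + 1 - r : ℕ) ≤
          |(occurrenceCount v m w : ℝ) - (N + 1 - r : ℕ) * (∏ i, μ.real {v i}) / r|})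
      atTop (nhds 0) := by
  have hM : Tendsto (fun N : ℕ => N + 1 - r) atTop atTop :=
    (tendsto_sub_atTop_nat r).comp (tendsto_add_atTop_nat 1)
  refine squeeze_zero' (Eventually.of_forall fun _ => measureReal_nonneg) ?_
    ((tendsto_const_div_atTop_nhds_zero_nat (r / ε ^ 2 : ℝ)).comp hM)
  filter_upwards [hM.eventually_ge_atTop ⌈2 / ε⌉₊] with N hN
  exact measureReal_exists_occurrenceCount_deviation_le μ
    ((div_le_iff₀' hε).1 (Nat.ceil_le.1 hN))

end Bernoulli

lemma exists_isProbabilityMeasure_measureReal_singleton {β : Type*} [Fintype β]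
    [MeasurableSpace β] [MeasurableSingletonClass β] {p : β → ℝ} (hp : ∀ i, 0 ≤ p i)
    (hsum : ∑ i, p i = 1) :
    ∃ μ : Measure β, IsProbabilityMeasure μ ∧ ∀ i, μ.real {i} = p i := by
  have h : ∑ i, ENNReal.ofReal (p i) = 1 := by
    rw [← ENNReal.ofReal_sum_of_nonneg fun i _ => hp i, hsum, ENNReal.ofReal_one]
  refine ⟨(PMF.ofFintype _ h).toMeasure, inferInstance, fun i => ?_⟩
  rw [measureReal_def, PMF.toMeasure_apply_singleton _ _ (measurableSet_singleton i),
    PMF.ofFintype_apply, ENNReal.toReal_ofReal (hp i)]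

lemma measureReal_pi_finset {α ι : Type*} [MeasurableSpace α] [MeasurableSingletonClass α]
    [Fintype ι] (μ : Measure α) [SigmaFinite μ] (S : Finset (ι → α)) :
    (Measure.pi fun _ : ι => μ).real S = ∑ w ∈ S, ∏ j, μ.real {w j} := by
  rw [← sum_measureReal_singleton]
  refine sum_congr rfl fun w _ => ?_
  rw [measureReal_def, Measure.pi_singleton, ENNReal.toReal_prod]
  rfl

theorem cassels_bad_blocks_measure_tendsto_zero_general (b : ℕ)
    (p : Fin b → ℝ) (hp : ∀ i, 0 < p i) (hsum : ∑ i, p i = 1)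
    (r : ℕ) (v : Fin r → Fin b)
    (ε : ℝ) (hε : 0 < ε) :
    Tendsto
      (fun N : ℕ =>
        ∑ w ∈ (univ : Finset (Fin N → Fin b)).filter
          (fun w => ∃ m < r,
            ε * ((N + 1 - r : ℕ) : ℝ) ≤
              |((((Finset.range (N + 1 - r)).filter
                    (fun s => s % r = m ∧
                      ∀ i : Fin r, ∀ h : s + (i : ℕ) < N, w ⟨s + i, h⟩ = v i)).card : ℝ))
                - ((N + 1 - r : ℕ) : ℝ) * (∏ i, p (v i)) / r|),
          ∏ j, p (w j))
      atTop (nhds 0) ∧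
    ∀ᶠ N : ℕ in atTop,
      (∑ w ∈ (univ : Finset (Fin N → Fin b)).filter
          (fun w => ∃ m < r,
            ε * ((N + 1 - r : ℕ) : ℝ) ≤
              |((((Finset.range (N + 1 - r)).filter
                    (fun s => s % r = m ∧
                      ∀ i : Fin r, ∀ h : s + (i : ℕ) < N, w ⟨s + i, h⟩ = v i)).card : ℝ))
                - ((N + 1 - r : ℕ) : ℝ) * (∏ i, p (v i)) / r|),
          ∏ j, p (w j)) < ε := by
  obtain ⟨μ, _, hμ⟩ :=
    exists_isProbabilityMeasure_measureReal_singleton (fun i => (hp i).le) hsum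
  have hbernoulli : ∀ N (S : Finset (Fin N → Fin b)),
      ∑ w ∈ S, ∏ j, p (w j) = (Measure.pi fun _ => μ).real (S : Set (Fin N → Fin b)) := by
    simp [measureReal_pi_finset, hμ]
  have key := tendsto_measureReal_exists_occurrenceCount_deviation μ v hε
  simp only [hμ] at key
  simp only [hbernoulli, coe_filter, mem_univ, true_and]
  exact ⟨key, key.eventually_lt_const hε⟩

/-- **Cassels-style discrepancy bound.** Fix a base `b ≥ 2`, positive biases `p` summing to
`1`, a block `v` of length `r ≥ 1`, and `0 < ε` smaller than `∏_{i<r} p_{w i}` for every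
length-`r` block `w`.  For a length-`N` block `w` (`N ≥ r`) and `0 ≤ m < r`, let `R_m(w,v)`
be the number of occurrences of `v` in `w` starting at positions `≡ m (mod r)`.  Let `B_N`
be the set of length-`N` blocks `w` such that for some `m < r`,
`|R_m(w,v) - (1/r)·(N-r+1)·∏_{i<r} p_{v i}| ≥ ε·(N-r+1)`.
Then the Bernoulli measure of `B_N` (the sum over `w ∈ B_N` of `∏_{j<N} p_{w j}`) tends to
`0` as `N → ∞`; in particular, it is `< ε` for all sufficiently large `N`. -/
theorem cassels_bad_blocks_measure_tendsto_zero (b : ℕ) (hb : 2 ≤ b)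
    (p : Fin b → ℝ) (hp : ∀ i, 0 < p i) (hsum : ∑ i, p i = 1)
    (r : ℕ) (hr : 1 ≤ r) (v : Fin r → Fin b)
    (ε : ℝ) (hε : 0 < ε) (hεmin : ∀ w : Fin r → Fin b, ε < ∏ i, p (w i)) :
    Tendsto
      (fun N : ℕ =>
        ∑ w ∈ (univ : Finset (Fin N → Fin b)).filter
          (fun w => ∃ m < r,
            ε * ((N + 1 - r : ℕ) : ℝ) ≤
              |((((Finset.range (N + 1 - r)).filter
                    (fun s => s % r = m ∧
                      ∀ i : Fin r, ∀ h : s + (i : ℕ) < N, w ⟨s + i, h⟩ = v i)).card : ℝ))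
                - ((N + 1 - r : ℕ) : ℝ) * (∏ i, p (v i)) / r|),
          ∏ j, p (w j))
      atTop (nhds 0) ∧
    ∀ᶠ N : ℕ in atTop,
      (∑ w ∈ (univ : Finset (Fin N → Fin b)).filter
          (fun w => ∃ m < r,
            ε * ((N + 1 - r : ℕ) : ℝ) ≤
              |((((Finset.range (N + 1 - r)).filter
                    (fun s => s % r = m ∧
                      ∀ i : Fin r, ∀ h : s + (i : ℕ) < N, w ⟨s + i, h⟩ = v i)).card : ℝ))
                - ((N + 1 - r : ℕ) : ℝ) * (∏ i, p (v i)) / r|),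
          ∏ j, p (w j)) < ε :=
  cassels_bad_blocks_measure_tendsto_zero_general b p hp hsum r v ε hε
end
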